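/- arXiv:1909.05244 — 4 statements merged into one kernel-verified Lean document; each statement's English description precedes it below -/
import Mathlib

section
/- Suppose A ∈ ℝ^{k×J} is a matrix with A · 𝔼[γ₀(1,X) − γ₀(0,X)] = 0 (the moment condition holds at the true regression). Then for every measurable γ : {0,1} × 𝒳 → ℝ^J with 𝔼[|γ(Z,X)|²] < ∞, the doubly robust moment function has mean zero when evaluated at the true balancing weight: 𝔼[ A·(γ(1,X) − γ(0,X)) + α₀(Z,X)·A·(V − γ(Z,X)) ] = 0 (as a vector in ℝ^k). -/
/-!
Since `Z ∈ {0, 1}`, `α₀(Z,X) • g(Z,X) = (Z / π₀(X)) • g(1,X) - ((1 - Z) / (1 - π₀(X))) • g(0,X)`,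
and pulling the `σ(X)`-measurable factor `g(i,X) / π₀(X)` out of `𝔼[Z | X] = π₀(X)` gives
`𝔼[α₀(Z,X) • g(Z,X)] = 𝔼[g(1,X) - g(0,X)]` for every integrable `g(Z,X)`. As `α₀(Z,X)` is
`σ(Z,X)`-measurable, the tower property gives `𝔼[α₀(Z,X) • V] = 𝔼[α₀(Z,X) • γ₀(Z,X)]`. Hence the
score `γ(1,X) - γ(0,X) + α₀(Z,X) • (V - γ(Z,X))` has mean `𝔼[γ₀(1,X) - γ₀(0,X)]` whatever `γ` is,
and `A` annihilates it.
-/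

open MeasureTheory ProbabilityTheory

theorem Matrix.integral_mulVec {Ω m n : Type*} [MeasurableSpace Ω] {μ : Measure Ω} [Fintype m]
    [Fintype n] (A : Matrix m n ℝ) {f : Ω → n → ℝ} (hf : Integrable f μ) :
    ∫ ω, A.mulVec (f ω) ∂μ = A.mulVec (∫ ω, f ω ∂μ) :=
  A.mulVecLin.toContinuousLinearMap.integral_comp_comm hf

theorem abs_div_le_inv_of_le {z p c : ℝ} (hc : 0 < c) (hz : z ∈ Set.Icc 0 1) (hcp : c ≤ p) :
    |z / p| ≤ c⁻¹ := by
  rw [abs_div, abs_of_nonneg hz.1, abs_of_pos (hc.trans_le hcp), ← one_div]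
  exact div_le_div₀ zero_le_one hz.2 hc hcp

theorem MeasureTheory.Integrable.div_smul_of_le {Ω E : Type*} [MeasurableSpace Ω]
    {μ : Measure Ω} [NormedAddCommGroup E] [NormedSpace ℝ E] {W p : Ω → ℝ} {F : Ω → E} {c : ℝ}
    (hF : Integrable F μ) (hW : Measurable W) (hp : Measurable p) (hc : 0 < c)
    (hW01 : ∀ ω, W ω ∈ Set.Icc 0 1) (hcp : ∀ᵐ ω ∂μ, c ≤ p ω) :
    Integrable (fun ω ↦ (W ω / p ω) • F ω) μ :=
  hF.bdd_smul c⁻¹ (hW.div hp).aestronglyMeasurable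
    (hcp.mono fun ω h ↦ abs_div_le_inv_of_le hc (hW01 ω) h)

section ConditionalExpectation

variable {Ω E : Type*} {m mΩ : MeasurableSpace Ω} {μ : Measure Ω}
  [NormedAddCommGroup E] [NormedSpace ℝ E] [CompleteSpace E]

theorem integral_smul_condExp (hm : m ≤ mΩ) [SigmaFinite (μ.trim hm)] {f : Ω → ℝ} {g : Ω → E}
    (hf : AEStronglyMeasurable[m] f μ) (hfg : Integrable (fun ω ↦ f ω • g ω) μ)
    (hg : Integrable g μ) :
    ∫ ω, f ω • μ[g|m] ω ∂μ = ∫ ω, f ω • g ω ∂μ := by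
  rw [← integral_condExp hm (f := fun ω ↦ f ω • g ω)]
  exact integral_congr_ae (condExp_smul_of_aestronglyMeasurable_left hf hfg hg).symm

theorem condExp_const_sub_ae_eq (hm : m ≤ mΩ) [IsFiniteMeasure μ] {W p : Ω → ℝ}
    (hW : Integrable W μ) (hWp : μ[W|m] =ᵐ[μ] p) (a : ℝ) :
    μ[fun ω ↦ a - W ω|m] =ᵐ[μ] fun ω ↦ a - p ω := by
  filter_upwards [condExp_sub (integrable_const a) hW m, hWp] with ω h hWω
  rw [show (fun ω ↦ a - W ω) = (fun _ ↦ a) - W from rfl, h, Pi.sub_apply, condExp_const hm,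
    hWω]

theorem condExp_div_smul_ae_eq {W p : Ω → ℝ} {G : Ω → E} (hW : Integrable W μ)
    (hWp : μ[W|m] =ᵐ[μ] p) (hp : Measurable[m] p) (hp0 : ∀ᵐ ω ∂μ, p ω ≠ 0)
    (hG : AEStronglyMeasurable[m] G μ) (hWG : Integrable (fun ω ↦ (W ω / p ω) • G ω) μ) :
    μ[fun ω ↦ (W ω / p ω) • G ω|m] =ᵐ[μ] G := by
  have hsplit : (fun ω ↦ (W ω / p ω) • G ω) = W • fun ω ↦ (p ω)⁻¹ • G ω := by
    ext ω
    simp only [Pi.smul_apply', div_eq_mul_inv, mul_smul]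
  rw [hsplit] at hWG ⊢
  filter_upwards [condExp_smul_of_aestronglyMeasurable_right hW hWG
    (hp.inv.stronglyMeasurable.aestronglyMeasurable.smul hG), hWp, hp0] with ω h hWω hpω
  rw [h, Pi.smul_apply', hWω, smul_inv_smul₀ hpω]

theorem integrable_and_integral_div_smul (hm : m ≤ mΩ) [SigmaFinite (μ.trim hm)]
    {W p : Ω → ℝ} {G : Ω → E} (hW : Integrable W μ)
    (hWp : μ[W|m] =ᵐ[μ] p) (hp : Measurable[m] p) (hp0 : ∀ᵐ ω ∂μ, p ω ≠ 0)
    (hG : AEStronglyMeasurable[m] G μ) (hWG : Integrable (fun ω ↦ (W ω / p ω) • G ω) μ) :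
    Integrable G μ ∧ ∫ ω, (W ω / p ω) • G ω ∂μ = ∫ ω, G ω ∂μ :=
  have h := condExp_div_smul_ae_eq hW hWp hp hp0 hG hWG
  ⟨integrable_condExp.congr h, (integral_condExp hm).symm.trans (integral_congr_ae h)⟩

end ConditionalExpectation

noncomputable def balancingWeight {𝒳 : Type*} (π₀ : 𝒳 → ℝ) (z : ℝ) (x : 𝒳) : ℝ :=
  z / π₀ x - (1 - z) / (1 - π₀ x)

noncomputable def doublyRobustScore {𝒳 E : Type*} [AddCommGroup E] [Module ℝ E] (π₀ : 𝒳 → ℝ)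
    (γ : ℝ → 𝒳 → E) (z : ℝ) (x : 𝒳) (v : E) : E :=
  γ 1 x - γ 0 x + balancingWeight π₀ z x • (v - γ z x)

section BalancingWeight

variable {Ω 𝒳 E : Type*} [NormedAddCommGroup E] [NormedSpace ℝ E] {π₀ : 𝒳 → ℝ}

theorem measurable_balancingWeight [MeasurableSpace 𝒳] (hπ : Measurable π₀) :
    Measurable fun q : ℝ × 𝒳 ↦ balancingWeight π₀ q.1 q.2 := by
  unfold balancingWeight
  fun_prop

theorem balancingWeight_smul {z : ℝ} (hz : z = 0 ∨ z = 1) (x : 𝒳) (v : ℝ → E) :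
    balancingWeight π₀ z x • v z = (z / π₀ x) • v 1 - ((1 - z) / (1 - π₀ x)) • v 0 := by
  rcases hz with rfl | rfl <;> simp [balancingWeight]

theorem abs_balancingWeight_le {z c : ℝ} {x : 𝒳} (hz : z = 0 ∨ z = 1) (hc : 0 < c)
    (hπ₀ : c ≤ π₀ x) (hπ₁ : π₀ x ≤ 1 - c) : |balancingWeight π₀ z x| ≤ c⁻¹ := by
  have h01 : (1 : ℝ) ∈ Set.Icc 0 1 := ⟨zero_le_one, le_rfl⟩
  rcases hz with rfl | rfl
  · simpa [balancingWeight] using abs_div_le_inv_of_le hc h01 (by linarith : c ≤ 1 - π₀ x)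
  · simpa [balancingWeight] using abs_div_le_inv_of_le hc h01 hπ₀

variable [MeasurableSpace Ω] [MeasurableSpace 𝒳] {μ : Measure Ω} {X : Ω → 𝒳} {Z : Ω → ℝ}
  {c : ℝ}

theorem MeasureTheory.Integrable.balancingWeight_smul {F : Ω → E} (hF : Integrable F μ)
    (hX : Measurable X) (hZ : Measurable Z) (hZ01 : ∀ ω, Z ω = 0 ∨ Z ω = 1) (hπ : Measurable π₀)
    (hc : 0 < c) (hover : ∀ᵐ ω ∂μ, c ≤ π₀ (X ω) ∧ π₀ (X ω) ≤ 1 - c) :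
    Integrable (fun ω ↦ balancingWeight π₀ (Z ω) (X ω) • F ω) μ :=
  hF.bdd_smul c⁻¹ ((measurable_balancingWeight hπ).comp (hZ.prodMk hX)).aestronglyMeasurable
    (hover.mono fun ω h ↦ abs_balancingWeight_le (hZ01 ω) hc h.1 h.2)

variable [IsFiniteMeasure μ] [CompleteSpace E] [MeasurableSpace E] [BorelSpace E]
  [SecondCountableTopology E]

theorem integrable_and_integral_balancingWeight_smul (hX : Measurable X) (hZ : Measurable Z)
    (hZ01 : ∀ ω, Z ω = 0 ∨ Z ω = 1) (hπ : Measurable π₀)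
    (hcond : ∀ᵐ ω ∂μ, (μ[Z | MeasurableSpace.comap X inferInstance]) ω = π₀ (X ω))
    (hc : 0 < c) (hover : ∀ᵐ ω ∂μ, c ≤ π₀ (X ω) ∧ π₀ (X ω) ≤ 1 - c)
    {g : ℝ → 𝒳 → E} (hg : Measurable fun q : ℝ × 𝒳 ↦ g q.1 q.2)
    (hgZX : Integrable (fun ω ↦ g (Z ω) (X ω)) μ) :
    Integrable (fun ω ↦ g 1 (X ω) - g 0 (X ω)) μ ∧
      ∫ ω, balancingWeight π₀ (Z ω) (X ω) • g (Z ω) (X ω) ∂μ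
        = ∫ ω, (g 1 (X ω) - g 0 (X ω)) ∂μ := by
  have hmX : MeasurableSpace.comap X inferInstance ≤ ‹MeasurableSpace Ω› := hX.comap_le
  have hXm : Measurable[MeasurableSpace.comap X inferInstance] X := comap_measurable X
  have hg1X : Measurable[MeasurableSpace.comap X inferInstance] fun ω ↦ g 1 (X ω) :=
    hg.comp (measurable_const.prodMk hXm)
  have hg0X : Measurable[MeasurableSpace.comap X inferInstance] fun ω ↦ g 0 (X ω) :=
    hg.comp (measurable_const.prodMk hXm)
  have hZ01' : ∀ ω, Z ω ∈ Set.Icc 0 1 := fun ω ↦ by rcases hZ01 ω with h | h <;> simp [h]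
  have h1Z01 : ∀ ω, 1 - Z ω ∈ Set.Icc 0 1 := fun ω ↦ by rcases hZ01 ω with h | h <;> simp [h]
  have hZint : Integrable Z μ := .of_mem_Icc 0 1 hZ.aemeasurable (ae_of_all _ hZ01')
  have h1Zint : Integrable (fun ω ↦ 1 - Z ω) μ := (integrable_const 1).sub hZint
  have hπX : ∀ᵐ ω ∂μ, c ≤ π₀ (X ω) := hover.mono fun _ h ↦ h.1
  have h1πX : ∀ᵐ ω ∂μ, c ≤ 1 - π₀ (X ω) := hover.mono fun _ h ↦ by linarith [h.2]
  have hint1 : Integrable (fun ω ↦ (Z ω / π₀ (X ω)) • g 1 (X ω)) μ := by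
    refine (hgZX.div_smul_of_le hZ (hπ.comp hX) hc hZ01' hπX).congr (ae_of_all _ fun ω ↦ ?_)
    rcases hZ01 ω with h | h <;> simp [h]
  have hint0 : Integrable (fun ω ↦ ((1 - Z ω) / (1 - π₀ (X ω))) • g 0 (X ω)) μ := by
    refine (hgZX.div_smul_of_le (W := fun ω ↦ 1 - Z ω) (measurable_const.sub hZ)
      (measurable_const.sub (hπ.comp hX)) hc h1Z01 h1πX).congr (ae_of_all _ fun ω ↦ ?_)
    rcases hZ01 ω with h | h <;> simp [h]
  obtain ⟨hg1, hI1⟩ := integrable_and_integral_div_smul hmX hZint hcond (hπ.comp hXm)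
    (hπX.mono fun _ h ↦ (hc.trans_le h).ne') hg1X.stronglyMeasurable.aestronglyMeasurable hint1
  obtain ⟨hg0, hI0⟩ := integrable_and_integral_div_smul hmX h1Zint
    (condExp_const_sub_ae_eq hmX hZint hcond 1)
    (measurable_const.sub (hπ.comp hXm)) (h1πX.mono fun _ h ↦ (hc.trans_le h).ne')
    hg0X.stronglyMeasurable.aestronglyMeasurable hint0
  refine ⟨hg1.sub hg0, ?_⟩
  rw [integral_congr_ae (ae_of_all _ fun ω ↦
      balancingWeight_smul (hZ01 ω) (X ω) fun z ↦ g z (X ω)),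
    integral_sub hint1 hint0, hI1, hI0, integral_sub hg1 hg0]

theorem integrable_and_integral_doublyRobustScore (hX : Measurable X) (hZ : Measurable Z)
    (hZ01 : ∀ ω, Z ω = 0 ∨ Z ω = 1) (hπ : Measurable π₀)
    (hcond : ∀ᵐ ω ∂μ, (μ[Z | MeasurableSpace.comap X inferInstance]) ω = π₀ (X ω))
    (hc : 0 < c) (hover : ∀ᵐ ω ∂μ, c ≤ π₀ (X ω) ∧ π₀ (X ω) ≤ 1 - c)
    {V : Ω → E} (hV : Integrable V μ) {γ₀ : ℝ → 𝒳 → E}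
    (hγ₀ : Measurable fun q : ℝ × 𝒳 ↦ γ₀ q.1 q.2)
    (hγ₀cond : ∀ᵐ ω ∂μ,
      (μ[V | MeasurableSpace.comap (fun ω' ↦ (Z ω', X ω')) inferInstance]) ω = γ₀ (Z ω) (X ω))
    {γ : ℝ → 𝒳 → E} (hγ : Measurable fun q : ℝ × 𝒳 ↦ γ q.1 q.2)
    (hγZX : Integrable (fun ω ↦ γ (Z ω) (X ω)) μ) :
    Integrable (fun ω ↦ doublyRobustScore π₀ γ (Z ω) (X ω) (V ω)) μ ∧
      ∫ ω, doublyRobustScore π₀ γ (Z ω) (X ω) (V ω) ∂μ = ∫ ω, (γ₀ 1 (X ω) - γ₀ 0 (X ω)) ∂μ := by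
  have hwV := hV.balancingWeight_smul hX hZ hZ01 hπ hc hover
  have hwγ := hγZX.balancingWeight_smul hX hZ hZ01 hπ hc hover
  obtain ⟨hΔγ, hIγ⟩ :=
    integrable_and_integral_balancingWeight_smul hX hZ hZ01 hπ hcond hc hover hγ hγZX
  obtain ⟨-, hIγ₀⟩ := integrable_and_integral_balancingWeight_smul hX hZ hZ01 hπ hcond hc
    hover hγ₀ (integrable_condExp.congr hγ₀cond)
  have hIwV : ∫ ω, balancingWeight π₀ (Z ω) (X ω) • V ω ∂μ
      = ∫ ω, balancingWeight π₀ (Z ω) (X ω) • γ₀ (Z ω) (X ω) ∂μ := by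
    rw [← integral_smul_condExp (f := fun ω ↦ balancingWeight π₀ (Z ω) (X ω))
      (hZ.prodMk hX).comap_le
      ((measurable_balancingWeight hπ).comp (comap_measurable _)).aestronglyMeasurable hwV hV]
    exact integral_congr_ae (hγ₀cond.mono fun ω h ↦ congrArg (_ • ·) h)
  have hwVγ : Integrable
      (fun ω ↦ balancingWeight π₀ (Z ω) (X ω) • (V ω - γ (Z ω) (X ω))) μ :=
    (hwV.sub hwγ).congr (ae_of_all _ fun ω ↦ (smul_sub _ _ _).symm)
  refine ⟨hΔγ.add hwVγ, ?_⟩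
  simp only [doublyRobustScore]
  rw [integral_add hΔγ hwVγ]
  simp only [smul_sub]
  rw [integral_sub hwV hwγ, hIwV, hIγ₀, hIγ, add_sub_cancel]

end BalancingWeight

theorem doubly_robust_moment_zero_at_true_balancing_weight_general
    {Ω 𝒳 : Type*} [MeasureSpace Ω] [IsProbabilityMeasure (ℙ : Measure Ω)]
    [MeasurableSpace 𝒳] {J k : ℕ}
    (X : Ω → 𝒳) (hX : Measurable X)
    (Z : Ω → ℝ) (hZ : Measurable Z) (hZ01 : ∀ ω, Z ω = 0 ∨ Z ω = 1)
    (π₀ : 𝒳 → ℝ) (hπ : Measurable π₀)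
    (hcond : ∀ᵐ ω ∂ℙ, (ℙ[Z | MeasurableSpace.comap X inferInstance]) ω = π₀ (X ω))
    (c : ℝ) (hc0 : 0 < c)
    (hover : ∀ᵐ ω ∂ℙ, c ≤ π₀ (X ω) ∧ π₀ (X ω) ≤ 1 - c)
    (V : Ω → (Fin J → ℝ)) (hV : Measurable V)
    (hV2 : Integrable (fun ω => ‖V ω‖ ^ 2) ℙ)
    (γ₀ : ℝ → 𝒳 → (Fin J → ℝ)) (hγ₀ : Measurable (fun p : ℝ × 𝒳 => γ₀ p.1 p.2))
    (hγ₀cond : ∀ᵐ ω ∂ℙ,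
      (ℙ[V | MeasurableSpace.comap (fun ω' => (Z ω', X ω')) inferInstance]) ω
        = γ₀ (Z ω) (X ω))
    (A : Matrix (Fin k) (Fin J) ℝ)
    (hmoment : A.mulVec (∫ ω, (γ₀ 1 (X ω) - γ₀ 0 (X ω)) ∂ℙ) = 0)
    (γ : ℝ → 𝒳 → (Fin J → ℝ)) (hγ : Measurable (fun p : ℝ × 𝒳 => γ p.1 p.2))
    (hγ2 : Integrable (fun ω => ‖γ (Z ω) (X ω)‖ ^ 2) ℙ) :
    ∫ ω, (A.mulVec (γ 1 (X ω) - γ 0 (X ω))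
        + (Z ω / π₀ (X ω) - (1 - Z ω) / (1 - π₀ (X ω)))
          • A.mulVec (V ω - γ (Z ω) (X ω))) ∂ℙ = 0 := by
  have hVint : Integrable V ℙ :=
    ((memLp_two_iff_integrable_sq_norm hV.aestronglyMeasurable).2 hV2).integrable one_le_two
  have hγint : Integrable (fun ω ↦ γ (Z ω) (X ω)) ℙ :=
    ((memLp_two_iff_integrable_sq_norm (hγ.comp (hZ.prodMk hX)).aestronglyMeasurable).2
      hγ2).integrable one_le_two
  obtain ⟨hint, hI⟩ := integrable_and_integral_doublyRobustScore hX hZ hZ01 hπ hcond hc0 hover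
    hVint hγ₀ hγ₀cond hγ hγint
  calc _ = ∫ ω, A.mulVec (doublyRobustScore π₀ γ (Z ω) (X ω) (V ω)) := by
        simp only [doublyRobustScore, balancingWeight, Matrix.mulVec_add, Matrix.mulVec_smul]
    _ = 0 := by rw [Matrix.integral_mulVec A hint, hI, hmoment]

/-- If the moment condition `A·𝔼[γ₀(1,X) − γ₀(0,X)] = 0` holds at the true regression `γ₀`,
then for every measurable square-integrable `γ` the doubly robust moment function has mean
zero when evaluated at the true balancing weight `α₀`:
`𝔼[A(γ(1,X) − γ(0,X)) + α₀(Z,X)·A(V − γ(Z,X))] = 0`. -/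
theorem doubly_robust_moment_zero_at_true_balancing_weight
    {Ω 𝒳 : Type*} [MeasureSpace Ω] [IsProbabilityMeasure (ℙ : Measure Ω)]
    [MeasurableSpace 𝒳] {J k : ℕ}
    (X : Ω → 𝒳) (hX : Measurable X)
    (Z : Ω → ℝ) (hZ : Measurable Z) (hZ01 : ∀ ω, Z ω = 0 ∨ Z ω = 1)
    (π₀ : 𝒳 → ℝ) (hπ : Measurable π₀)
    (hcond : ∀ᵐ ω ∂ℙ, (ℙ[Z | MeasurableSpace.comap X inferInstance]) ω = π₀ (X ω))
    (c : ℝ) (hc0 : 0 < c) (hc2 : c ≤ 1/2)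
    (hover : ∀ᵐ ω ∂ℙ, c ≤ π₀ (X ω) ∧ π₀ (X ω) ≤ 1 - c)
    (V : Ω → (Fin J → ℝ)) (hV : Measurable V)
    (hV2 : Integrable (fun ω => ‖V ω‖ ^ 2) ℙ)
    (γ₀ : ℝ → 𝒳 → (Fin J → ℝ)) (hγ₀ : Measurable (fun p : ℝ × 𝒳 => γ₀ p.1 p.2))
    (hγ₀cond : ∀ᵐ ω ∂ℙ,
      (ℙ[V | MeasurableSpace.comap (fun ω' => (Z ω', X ω')) inferInstance]) ω
        = γ₀ (Z ω) (X ω))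
    (A : Matrix (Fin k) (Fin J) ℝ)
    (hmoment : A.mulVec (∫ ω, (γ₀ 1 (X ω) - γ₀ 0 (X ω)) ∂ℙ) = 0)
    (γ : ℝ → 𝒳 → (Fin J → ℝ)) (hγ : Measurable (fun p : ℝ × 𝒳 => γ p.1 p.2))
    (hγ2 : Integrable (fun ω => ‖γ (Z ω) (X ω)‖ ^ 2) ℙ) :
    ∫ ω, (A.mulVec (γ 1 (X ω) - γ 0 (X ω))
        + (Z ω / π₀ (X ω) - (1 - Z ω) / (1 - π₀ (X ω)))
          • A.mulVec (V ω - γ (Z ω) (X ω))) ∂ℙ = 0 :=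
  doubly_robust_moment_zero_at_true_balancing_weight_general X hX Z hZ hZ01 π₀ hπ hcond c hc0 hover
    V hV hV2 γ₀ hγ₀ hγ₀cond A hmoment γ hγ hγ2
end

section
/- Under the Identification assumption, for every bounded measurable function g : ℝ × 𝒳 → ℝ, the κ-weighted expectations identify complier counterfactual expectations: 𝔼[κ⁽⁰⁾(W) · g(Y,X)] = 𝔼[g(Y⁽⁰⁾, X) · 1{D⁽¹⁾ > D⁽⁰⁾}] and 𝔼[κ⁽¹⁾(W) · g(Y,X)] = 𝔼[g(Y⁽¹⁾, X) · 1{D⁽¹⁾ > D⁽⁰⁾}]. -/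
/-!
Write `V = (Y⁰, Y¹, D⁰, D¹)`. Conditional independence of `V` and the binary instrument `Z`
given `X` makes `Z` and `𝔼[Z | X]` integrate alike against every `σ(X, V)`-measurable function:
on a rectangle `A ∩ V⁻¹' s` with `A ∈ σ(X)` this is the product formula defining conditional
independence, and a π-λ argument for the measures with densities `Z` and `𝔼[Z | X]` extends it to
all of `σ(X, V)`. Dividing by the propensity score gives `𝔼[Z F₁ / π₀(X)] = 𝔼[F₁]` and, applied
to `1 - Z`, `𝔼[(1 - Z) F₀ / (1 - π₀(X))] = 𝔼[F₀]` for bounded `σ(X, V)`-measurable `F₀, F₁`.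
On `{Z = z}` the observed treatment is `Dᶻ`, so the κ-weighted integrand is
`Z F₁ / π₀(X) - (1 - Z) F₀ / (1 - π₀(X))` with `F_z = (Dᶻ - 1) g(Y⁰, X)` for `κ⁽⁰⁾` and
`F_z = Dᶻ g(Y¹, X)` for `κ⁽¹⁾`. In both cases
`F₁ - F₀ = (D¹ - D⁰) h`, which by monotonicity is `h` on compliers and `0` elsewhere.
-/

open MeasureTheory ProbabilityTheory

section

variable {Ω : Type*} {m₁ m₂ mΩ : MeasurableSpace Ω}

theorem MeasureTheory.Measure.trim_sup_eq_of_forall_inter_eq {μ ν : Measure Ω} [IsFiniteMeasure μ]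
    (h₁ : m₁ ≤ mΩ) (h₂ : m₂ ≤ mΩ)
    (h : ∀ A B, MeasurableSet[m₁] A → MeasurableSet[m₂] B → μ (A ∩ B) = ν (A ∩ B)) :
    μ.trim (sup_le h₁ h₂) = ν.trim (sup_le h₁ h₂) := by
  set C : Set (Set Ω) := Set.image2 (· ∩ ·) {A | MeasurableSet[m₁] A} {B | MeasurableSet[m₂] B}
  have hgen : m₁ ⊔ m₂ = MeasurableSpace.generateFrom C := by
    refine le_antisymm (sup_le (fun A hA => ?_) (fun B hB => ?_))
      (MeasurableSpace.generateFrom_le ?_)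
    · exact MeasurableSpace.measurableSet_generateFrom
        ⟨A, hA, Set.univ, MeasurableSet.univ, Set.inter_univ A⟩
    · exact MeasurableSpace.measurableSet_generateFrom
        ⟨Set.univ, MeasurableSet.univ, B, hB, Set.univ_inter B⟩
    · rintro _ ⟨A, hA, B, hB, rfl⟩
      exact (le_sup_left (b := m₂) _ hA).inter (le_sup_right (a := m₁) _ hB)
  have hpi : IsPiSystem C := by
    rintro _ ⟨A₁, hA₁, B₁, hB₁, rfl⟩ _ ⟨A₂, hA₂, B₂, hB₂, rfl⟩ -
    exact ⟨A₁ ∩ A₂, hA₁.inter hA₂, B₁ ∩ B₂, hB₁.inter hB₂, Set.inter_inter_inter_comm _ _ _ _⟩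
  refine @Measure.ext _ (m₁ ⊔ m₂) _ _ fun s hs => ?_
  rw [trim_measurableSet_eq _ hs, trim_measurableSet_eq _ hs]
  refine ext_on_measurableSpace_of_generate_finite mΩ C ?_ (sup_le h₁ h₂) hgen hpi ?_ hs
  · rintro _ ⟨A, hA, B, hB, rfl⟩
    exact h A B hA hB
  · simpa using h Set.univ Set.univ .univ .univ

theorem integral_withDensity_ofReal {μ : Measure Ω} {f : Ω → ℝ} (hf : AEMeasurable f μ)
    (hf0 : 0 ≤ᵐ[μ] f) (U : Ω → ℝ) :
    ∫ ω, U ω ∂μ.withDensity (fun ω => ENNReal.ofReal (f ω)) = ∫ ω, f ω * U ω ∂μ := by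
  rw [integral_withDensity_eq_integral_toReal_smul₀ hf.ennreal_ofReal
    (ae_of_all _ fun _ => ENNReal.ofReal_lt_top)]
  refine integral_congr_ae (hf0.mono fun ω h => ?_)
  simp [ENNReal.toReal_ofReal h]

theorem integral_mul_eq_of_forall_setIntegral_inter_eq {μ : Measure Ω} [IsFiniteMeasure μ]
    (h₁ : m₁ ≤ mΩ) (h₂ : m₂ ≤ mΩ) {f g : Ω → ℝ} (hf : Integrable f μ) (hg : Integrable g μ)
    (hf0 : 0 ≤ᵐ[μ] f) (hg0 : 0 ≤ᵐ[μ] g)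
    (h : ∀ A B, MeasurableSet[m₁] A → MeasurableSet[m₂] B →
      ∫ ω in A ∩ B, f ω ∂μ = ∫ ω in A ∩ B, g ω ∂μ)
    {U : Ω → ℝ} (hU : StronglyMeasurable[m₁ ⊔ m₂] U) :
    ∫ ω, f ω * U ω ∂μ = ∫ ω, g ω * U ω ∂μ := by
  have : IsFiniteMeasure (μ.withDensity fun ω => ENNReal.ofReal (f ω)) :=
    isFiniteMeasure_withDensity_ofReal hf.2
  have htrim := Measure.trim_sup_eq_of_forall_inter_eq
    (μ := μ.withDensity fun ω => ENNReal.ofReal (f ω))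
    (ν := μ.withDensity fun ω => ENNReal.ofReal (g ω)) h₁ h₂ fun A B hA hB => by
      have hAB := (h₁ _ hA).inter (h₂ _ hB)
      rw [withDensity_apply _ hAB, withDensity_apply _ hAB,
        ← ofReal_integral_eq_lintegral_ofReal hf.restrict (ae_restrict_of_ae hf0),
        ← ofReal_integral_eq_lintegral_ofReal hg.restrict (ae_restrict_of_ae hg0), h A B hA hB]
  rw [← integral_withDensity_ofReal hf.aemeasurable hf0,
    ← integral_withDensity_ofReal hg.aemeasurable hg0, integral_trim (sup_le h₁ h₂) hU,
    integral_trim (sup_le h₁ h₂) hU, htrim]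

end

theorem abs_mul_div_le_of_eq_zero_or_eq_one {z f p C c : ℝ} (hz : z = 0 ∨ z = 1) (hf : |f| ≤ C)
    (hc : 0 < c) (hcp : c ≤ p) : |z * (f / p)| ≤ C / c := by
  rcases hz with rfl | rfl
  · simpa using div_nonneg ((abs_nonneg f).trans hf) hc.le
  · rw [one_mul, abs_div, abs_of_pos (hc.trans_le hcp)]
    exact div_le_div₀ ((abs_nonneg f).trans hf) hf hc hcp

theorem integrable_of_forall_eq_zero_or_eq_one {Ω : Type*} {mΩ : MeasurableSpace Ω}
    {μ : Measure Ω} [IsFiniteMeasure μ] {Z : Ω → ℝ} (hZ : Measurable Z)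
    (hZ01 : ∀ ω, Z ω = 0 ∨ Z ω = 1) : Integrable Z μ :=
  .of_bound hZ.aestronglyMeasurable 1
    (ae_of_all _ fun ω => by rcases hZ01 ω with h | h <;> simp [h])

section

variable {Ω E : Type*} {m mΩ : MeasurableSpace Ω} [StandardBorelSpace Ω] [MeasurableSpace E]
  {μ : Measure Ω} [IsFiniteMeasure μ] {hm : m ≤ mΩ} {V : Ω → E} {Z : Ω → ℝ}

theorem setIntegral_inter_preimage_eq_condExp (hV : Measurable V) (hZ : Measurable Z)
    (hZ01 : ∀ ω, Z ω = 0 ∨ Z ω = 1) (hindep : CondIndepFun m hm V Z μ) {A : Set Ω} {s : Set E}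
    (hA : MeasurableSet[m] A) (hs : MeasurableSet s) :
    ∫ ω in A ∩ V ⁻¹' s, Z ω ∂μ = ∫ ω in A ∩ V ⁻¹' s, μ[Z|m] ω ∂μ := by
  set B := V ⁻¹' s
  set T := Z ⁻¹' {1}
  set q := μ[Z|m] with hq
  have hB : MeasurableSet B := hV hs
  have hT : MeasurableSet T := hZ (measurableSet_singleton 1)
  have hZT : Z = T.indicator fun _ => 1 := by
    funext ω
    rcases hZ01 ω with h | h <;> simp [T, h]
  have hBq : B.indicator 1 * q = B.indicator q := by
    funext ω
    by_cases h : ω ∈ B <;> simp [h]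
  have hsplit : μ⟦B ∩ T | m⟧ =ᵐ[μ] μ⟦B | m⟧ * q := by
    rw [show q = μ⟦T | m⟧ by rw [hq, ← hZT]]
    exact (condIndepFun_iff_condExp_inter_preimage_eq_mul hV hZ).mp hindep s {1} hs
      (measurableSet_singleton 1)
  have hpull : μ[B.indicator 1 * q | m] =ᵐ[μ] μ⟦B | m⟧ * q :=
    condExp_mul_of_stronglyMeasurable_right stronglyMeasurable_condExp
      (hBq ▸ integrable_condExp.indicator hB) ((integrable_const 1).indicator hB)
  calc ∫ ω in A ∩ B, Z ω ∂μ
      = ∫ ω in A, (B ∩ T).indicator (fun _ => 1) ω ∂μ := by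
        rw [hZT, setIntegral_indicator hT, setIntegral_indicator (hB.inter hT), Set.inter_assoc]
    _ = ∫ ω in A, (μ⟦B ∩ T | m⟧) ω ∂μ :=
        (setIntegral_condExp hm ((integrable_const 1).indicator (hB.inter hT)) hA).symm
    _ = ∫ ω in A, (μ[B.indicator 1 * q | m]) ω ∂μ :=
        setIntegral_congr_ae (hm _ hA) ((hsplit.trans hpull.symm).mono fun _ h _ => h)
    _ = ∫ ω in A, B.indicator q ω ∂μ := by
        rw [setIntegral_condExp hm (hBq ▸ integrable_condExp.indicator hB) hA, hBq]
    _ = ∫ ω in A ∩ B, q ω ∂μ := setIntegral_indicator hB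

theorem integral_mul_eq_integral_condExp_mul (hV : Measurable V) (hZ : Measurable Z)
    (hZ01 : ∀ ω, Z ω = 0 ∨ Z ω = 1) (hindep : CondIndepFun m hm V Z μ) {U : Ω → ℝ}
    (hU : Measurable[m ⊔ MeasurableSpace.comap V inferInstance] U) :
    ∫ ω, Z ω * U ω ∂μ = ∫ ω, μ[Z|m] ω * U ω ∂μ := by
  have hZ0 : 0 ≤ Z := fun ω => by rcases hZ01 ω with h | h <;> simp [h]
  refine integral_mul_eq_of_forall_setIntegral_inter_eq hm hV.comap_le
    (integrable_of_forall_eq_zero_or_eq_one hZ hZ01) integrable_condExp (ae_of_all _ hZ0)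
    (condExp_nonneg (ae_of_all _ hZ0)) ?_ hU.stronglyMeasurable
  rintro A _ hA ⟨s, hs, rfl⟩
  exact setIntegral_inter_preimage_eq_condExp hV hZ hZ01 hindep hA hs

theorem integral_mul_div_eq_integral (hV : Measurable V) (hZ : Measurable Z)
    (hZ01 : ∀ ω, Z ω = 0 ∨ Z ω = 1) (hindep : CondIndepFun m hm V Z μ) {p : Ω → ℝ}
    (hp : Measurable[m] p) (hcond : μ[Z|m] =ᵐ[μ] p) (hp0 : ∀ᵐ ω ∂μ, p ω ≠ 0) {F : Ω → ℝ}
    (hF : Measurable[m ⊔ MeasurableSpace.comap V inferInstance] F) :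
    ∫ ω, Z ω * (F ω / p ω) ∂μ = ∫ ω, F ω ∂μ := by
  rw [integral_mul_eq_integral_condExp_mul hV hZ hZ01 hindep (U := fun ω => F ω / p ω)
    (hF.div (hp.mono le_sup_left le_rfl))]
  refine integral_congr_ae ?_
  filter_upwards [hcond, hp0] with ω hω hpω
  rw [hω, mul_div_cancel₀ _ hpω]

theorem integral_one_sub_mul_div_eq_integral (hV : Measurable V) (hZ : Measurable Z)
    (hZ01 : ∀ ω, Z ω = 0 ∨ Z ω = 1) (hindep : CondIndepFun m hm V Z μ) {p : Ω → ℝ}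
    (hp : Measurable[m] p) (hcond : μ[Z|m] =ᵐ[μ] p) (hp1 : ∀ᵐ ω ∂μ, 1 - p ω ≠ 0) {F : Ω → ℝ}
    (hF : Measurable[m ⊔ MeasurableSpace.comap V inferInstance] F) :
    ∫ ω, (1 - Z ω) * (F ω / (1 - p ω)) ∂μ = ∫ ω, F ω ∂μ := by
  have hcond' : μ[fun ω => 1 - Z ω | m] =ᵐ[μ] fun ω => 1 - p ω := by
    filter_upwards [condExp_sub (integrable_const 1)
      (integrable_of_forall_eq_zero_or_eq_one hZ hZ01) m, hcond] with ω h1 h2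
    change μ[(fun _ => 1) - Z | m] ω = _
    rw [h1, Pi.sub_apply, condExp_const hm, h2]
  exact integral_mul_div_eq_integral hV (hZ.const_sub 1)
    (fun ω => by rcases hZ01 ω with h | h <;> simp [h])
    (hindep.comp measurable_id (measurable_const.sub measurable_id)) (hp.const_sub 1) hcond' hp1 hF

theorem integral_horvitzThompson_mul (hV : Measurable V) (hZ : Measurable Z)
    (hZ01 : ∀ ω, Z ω = 0 ∨ Z ω = 1) (hindep : CondIndepFun m hm V Z μ) {p : Ω → ℝ}
    (hp : Measurable[m] p) (hcond : μ[Z|m] =ᵐ[μ] p) {c : ℝ} (hc : 0 < c)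
    (hover : ∀ᵐ ω ∂μ, c ≤ p ω ∧ p ω ≤ 1 - c) {F₁ F₀ W : Ω → ℝ}
    (hF₁ : Measurable[m ⊔ MeasurableSpace.comap V inferInstance] F₁)
    (hF₀ : Measurable[m ⊔ MeasurableSpace.comap V inferInstance] F₀) {C : ℝ}
    (hF₁C : ∀ ω, |F₁ ω| ≤ C) (hF₀C : ∀ ω, |F₀ ω| ≤ C)
    (hW : ∀ ω, W ω = Z ω * F₁ ω + (1 - Z ω) * F₀ ω) :
    ∫ ω, (Z ω / p ω - (1 - Z ω) / (1 - p ω)) * W ω ∂μ = ∫ ω, (F₁ ω - F₀ ω) ∂μ := by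
  have hG : m ⊔ MeasurableSpace.comap V inferInstance ≤ mΩ := sup_le hm hV.comap_le
  have hZ01' : ∀ ω, 1 - Z ω = 0 ∨ 1 - Z ω = 1 := fun ω => by
    rcases hZ01 ω with h | h <;> simp [h]
  have hint₁ : Integrable (fun ω => Z ω * (F₁ ω / p ω)) μ :=
    .of_bound (hZ.mul ((hF₁.mono hG le_rfl).div (hp.mono hm le_rfl))).aestronglyMeasurable
      (C / c) (hover.mono fun ω h =>
        abs_mul_div_le_of_eq_zero_or_eq_one (hZ01 ω) (hF₁C ω) hc h.1)
  have hint₀ : Integrable (fun ω => (1 - Z ω) * (F₀ ω / (1 - p ω))) μ :=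
    .of_bound ((measurable_const.sub hZ).mul
      ((hF₀.mono hG le_rfl).div (measurable_const.sub (hp.mono hm le_rfl)))).aestronglyMeasurable
      (C / c) (hover.mono fun ω h =>
        abs_mul_div_le_of_eq_zero_or_eq_one (hZ01' ω) (hF₀C ω) hc (by linarith [h.2]))
  have hF₁int : Integrable F₁ μ :=
    .of_bound (hF₁.mono hG le_rfl).aestronglyMeasurable C (ae_of_all _ hF₁C)
  have hF₀int : Integrable F₀ μ :=
    .of_bound (hF₀.mono hG le_rfl).aestronglyMeasurable C (ae_of_all _ hF₀C)
  calc ∫ ω, (Z ω / p ω - (1 - Z ω) / (1 - p ω)) * W ω ∂μ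
      = ∫ ω, (Z ω * (F₁ ω / p ω) - (1 - Z ω) * (F₀ ω / (1 - p ω))) ∂μ := by
        refine integral_congr_ae (ae_of_all _ fun ω => ?_)
        dsimp only
        rw [hW]
        rcases hZ01 ω with h | h <;> rw [h] <;> ring
    _ = ∫ ω, F₁ ω ∂μ - ∫ ω, F₀ ω ∂μ := by
        rw [integral_sub hint₁ hint₀,
          integral_mul_div_eq_integral hV hZ hZ01 hindep hp hcond
            (hover.mono fun ω h => (hc.trans_le h.1).ne') hF₁,
          integral_one_sub_mul_div_eq_integral hV hZ hZ01 hindep hp hcond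
            (hover.mono fun ω h => by linarith [h.2]) hF₀]
    _ = ∫ ω, (F₁ ω - F₀ ω) ∂μ := (integral_sub hF₁int hF₀int).symm

end

theorem abs_mul_le_of_abs_le_one {d a C : ℝ} (hd : |d| ≤ 1) (ha : |a| ≤ C) : |d * a| ≤ C :=
  (abs_mul d a).trans_le ((mul_le_of_le_one_left (abs_nonneg a) hd).trans ha)

theorem sub_one_mul_observed_eq {z d₀ d₁ d y₀ y₁ : ℝ} (f : ℝ → ℝ) (hz : z = 0 ∨ z = 1)
    (hd₀ : d₀ = 0 ∨ d₀ = 1) (hd₁ : d₁ = 0 ∨ d₁ = 1) (hd : d = z * d₁ + (1 - z) * d₀)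
    (hy : y = d * y₁ + (1 - d) * y₀) :
    (d - 1) * f y = z * ((d₁ - 1) * f y₀) + (1 - z) * ((d₀ - 1) * f y₀) := by
  subst hd hy
  rcases hz with rfl | rfl <;> rcases hd₀ with rfl | rfl <;> rcases hd₁ with rfl | rfl <;> norm_num

theorem mul_observed_eq {z d₀ d₁ d y₀ y₁ : ℝ} (f : ℝ → ℝ) (hz : z = 0 ∨ z = 1)
    (hd₀ : d₀ = 0 ∨ d₀ = 1) (hd₁ : d₁ = 0 ∨ d₁ = 1) (hd : d = z * d₁ + (1 - z) * d₀)
    (hy : y = d * y₁ + (1 - d) * y₀) :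
    d * f y = z * (d₁ * f y₁) + (1 - z) * (d₀ * f y₁) := by
  subst hd hy
  rcases hz with rfl | rfl <;> rcases hd₀ with rfl | rfl <;> rcases hd₁ with rfl | rfl <;> norm_num

theorem sub_mul_eq_ite_lt {d₀ d₁ : ℝ} (a : ℝ) (hd₀ : d₀ = 0 ∨ d₀ = 1) (hd₁ : d₁ = 0 ∨ d₁ = 1)
    (hle : d₀ ≤ d₁) : (d₁ - d₀) * a = if d₀ < d₁ then a else 0 := by
  rcases hd₀ with rfl | rfl <;> rcases hd₁ with rfl | rfl <;> norm_num at hle <;> simp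

theorem kappa_weighting_identifies_complier_expectations_general
    {Ω 𝒳 : Type*} [MeasureSpace Ω] [IsProbabilityMeasure (ℙ : Measure Ω)]
    [StandardBorelSpace Ω] [MeasurableSpace 𝒳]
    (X : Ω → 𝒳) (hX : Measurable X)
    (Z : Ω → ℝ) (hZ : Measurable Z) (hZ01 : ∀ ω, Z ω = 0 ∨ Z ω = 1)
    (π₀ : 𝒳 → ℝ) (hπ : Measurable π₀)
    (hcond : ∀ᵐ ω ∂ℙ, (ℙ[Z | MeasurableSpace.comap X inferInstance]) ω = π₀ (X ω))
    (c : ℝ) (hc0 : 0 < c)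
    (hover : ∀ᵐ ω ∂ℙ, c ≤ π₀ (X ω) ∧ π₀ (X ω) ≤ 1 - c)
    (Y0 Y1 : Ω → ℝ) (hY0 : Measurable Y0) (hY1 : Measurable Y1)
    (D0 D1 : Ω → ℝ) (hD0 : Measurable D0) (hD1 : Measurable D1)
    (hD001 : ∀ ω, D0 ω = 0 ∨ D0 ω = 1) (hD101 : ∀ ω, D1 ω = 0 ∨ D1 ω = 1)
    (hindep : CondIndepFun (MeasurableSpace.comap X inferInstance) hX.comap_le
      (fun ω => (Y0 ω, Y1 ω, D0 ω, D1 ω)) Z ℙ)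
    (hmono : ∀ᵐ ω ∂ℙ, D0 ω ≤ D1 ω)
    (D : Ω → ℝ) (hD : ∀ ω, D ω = Z ω * D1 ω + (1 - Z ω) * D0 ω)
    (Y : Ω → ℝ) (hY : ∀ ω, Y ω = D ω * Y1 ω + (1 - D ω) * Y0 ω)
    (g : ℝ → 𝒳 → ℝ) (hg : Measurable (fun p : ℝ × 𝒳 => g p.1 p.2))
    (hgbdd : ∃ C, ∀ y x, |g y x| ≤ C) :
    (∫ ω, (Z ω / π₀ (X ω) - (1 - Z ω) / (1 - π₀ (X ω))) * (D ω - 1) * g (Y ω) (X ω) ∂ℙ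
      = ∫ ω, (if D0 ω < D1 ω then g (Y0 ω) (X ω) else 0) ∂ℙ) ∧
    (∫ ω, (Z ω / π₀ (X ω) - (1 - Z ω) / (1 - π₀ (X ω))) * D ω * g (Y ω) (X ω) ∂ℙ
      = ∫ ω, (if D0 ω < D1 ω then g (Y1 ω) (X ω) else 0) ∂ℙ) := by
  obtain ⟨C, hC⟩ := hgbdd
  set V := fun ω => (Y0 ω, Y1 ω, D0 ω, D1 ω)
  have hV : Measurable V := hY0.prodMk (hY1.prodMk (hD0.prodMk hD1))
  set G := MeasurableSpace.comap X inferInstance ⊔ MeasurableSpace.comap V inferInstance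
  have hXG : Measurable[G] X := (comap_measurable X).mono le_sup_left le_rfl
  have hVG : Measurable[G] V := (comap_measurable V).mono le_sup_right le_rfl
  have hY0G : Measurable[G] Y0 := measurable_fst.comp hVG
  have hY1G : Measurable[G] Y1 := measurable_fst.comp (measurable_snd.comp hVG)
  have hD0G : Measurable[G] D0 :=
    measurable_fst.comp (measurable_snd.comp (measurable_snd.comp hVG))
  have hD1G : Measurable[G] D1 :=
    measurable_snd.comp (measurable_snd.comp (measurable_snd.comp hVG))
  have hgG {Y' : Ω → ℝ} (hY' : Measurable[G] Y') : Measurable[G] fun ω => g (Y' ω) (X ω) :=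
    hg.comp (hY'.prodMk hXG)
  have hp : Measurable[MeasurableSpace.comap X inferInstance] fun ω => π₀ (X ω) :=
    hπ.comp (comap_measurable X)
  have hcompliers (h : Ω → ℝ) :
      ∫ ω, (D1 ω - D0 ω) * h ω ∂ℙ = ∫ ω, (if D0 ω < D1 ω then h ω else 0) ∂ℙ :=
    integral_congr_ae (hmono.mono fun ω hω => sub_mul_eq_ite_lt _ (hD001 ω) (hD101 ω) hω)
  have habs (d : Ω → ℝ) (hd : ∀ ω, d ω = 0 ∨ d ω = 1) (ω : Ω) : |d ω| ≤ 1 ∧ |d ω - 1| ≤ 1 := by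
    rcases hd ω with h | h <;> simp [h]
  constructor
  · calc _ = ∫ ω, (Z ω / π₀ (X ω) - (1 - Z ω) / (1 - π₀ (X ω)))
              * ((D ω - 1) * g (Y ω) (X ω)) ∂ℙ := by simp_rw [mul_assoc]
      _ = ∫ ω, ((D1 ω - 1) * g (Y0 ω) (X ω) - (D0 ω - 1) * g (Y0 ω) (X ω)) ∂ℙ :=
          integral_horvitzThompson_mul hV hZ hZ01 hindep hp hcond hc0 hover
            ((hD1G.sub_const 1).mul (hgG hY0G)) ((hD0G.sub_const 1).mul (hgG hY0G))
            (fun ω => abs_mul_le_of_abs_le_one (habs D1 hD101 ω).2 (hC _ _))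
            (fun ω => abs_mul_le_of_abs_le_one (habs D0 hD001 ω).2 (hC _ _))
            (fun ω => sub_one_mul_observed_eq (g · (X ω)) (hZ01 ω) (hD001 ω) (hD101 ω)
              (hD ω) (hY ω))
      _ = _ := by simp_rw [← sub_mul, sub_sub_sub_cancel_right, hcompliers]
  · calc _ = ∫ ω, (Z ω / π₀ (X ω) - (1 - Z ω) / (1 - π₀ (X ω)))
              * (D ω * g (Y ω) (X ω)) ∂ℙ := by simp_rw [mul_assoc]
      _ = ∫ ω, (D1 ω * g (Y1 ω) (X ω) - D0 ω * g (Y1 ω) (X ω)) ∂ℙ :=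
          integral_horvitzThompson_mul hV hZ hZ01 hindep hp hcond hc0 hover
            (hD1G.mul (hgG hY1G)) (hD0G.mul (hgG hY1G))
            (fun ω => abs_mul_le_of_abs_le_one (habs D1 hD101 ω).1 (hC _ _))
            (fun ω => abs_mul_le_of_abs_le_one (habs D0 hD001 ω).1 (hC _ _))
            (fun ω => mul_observed_eq (g · (X ω)) (hZ01 ω) (hD001 ω) (hD101 ω) (hD ω) (hY ω))
      _ = _ := by simp_rw [← sub_mul, hcompliers]

/-- Under the IV identification assumption (conditional independence of potential outcomes
and the instrument given covariates, overlap, and monotonicity), for every bounded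
measurable `g`, the κ-weighted expectations identify complier counterfactual expectations:
`𝔼[κ⁽⁰⁾(W)·g(Y,X)] = 𝔼[g(Y⁽⁰⁾,X)·1{D⁽¹⁾>D⁽⁰⁾}]` and
`𝔼[κ⁽¹⁾(W)·g(Y,X)] = 𝔼[g(Y⁽¹⁾,X)·1{D⁽¹⁾>D⁽⁰⁾}]`. -/
theorem kappa_weighting_identifies_complier_expectations
    {Ω 𝒳 : Type*} [MeasureSpace Ω] [IsProbabilityMeasure (ℙ : Measure Ω)]
    [StandardBorelSpace Ω] [Nonempty Ω] [MeasurableSpace 𝒳]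
    (X : Ω → 𝒳) (hX : Measurable X)
    (Z : Ω → ℝ) (hZ : Measurable Z) (hZ01 : ∀ ω, Z ω = 0 ∨ Z ω = 1)
    (π₀ : 𝒳 → ℝ) (hπ : Measurable π₀)
    (hcond : ∀ᵐ ω ∂ℙ, (ℙ[Z | MeasurableSpace.comap X inferInstance]) ω = π₀ (X ω))
    (c : ℝ) (hc0 : 0 < c) (hc2 : c ≤ 1/2)
    (hover : ∀ᵐ ω ∂ℙ, c ≤ π₀ (X ω) ∧ π₀ (X ω) ≤ 1 - c)
    (Y0 Y1 : Ω → ℝ) (hY0 : Measurable Y0) (hY1 : Measurable Y1)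
    (D0 D1 : Ω → ℝ) (hD0 : Measurable D0) (hD1 : Measurable D1)
    (hD001 : ∀ ω, D0 ω = 0 ∨ D0 ω = 1) (hD101 : ∀ ω, D1 ω = 0 ∨ D1 ω = 1)
    (hindep : CondIndepFun (MeasurableSpace.comap X inferInstance) hX.comap_le
      (fun ω => (Y0 ω, Y1 ω, D0 ω, D1 ω)) Z ℙ)
    (hmono : ∀ᵐ ω ∂ℙ, D0 ω ≤ D1 ω)
    (hcompliers : 0 < ℙ {ω | D0 ω < D1 ω})
    (D : Ω → ℝ) (hD : ∀ ω, D ω = Z ω * D1 ω + (1 - Z ω) * D0 ω)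
    (Y : Ω → ℝ) (hY : ∀ ω, Y ω = D ω * Y1 ω + (1 - D ω) * Y0 ω)
    (g : ℝ → 𝒳 → ℝ) (hg : Measurable (fun p : ℝ × 𝒳 => g p.1 p.2))
    (hgbdd : ∃ C, ∀ y x, |g y x| ≤ C) :
    (∫ ω, (Z ω / π₀ (X ω) - (1 - Z ω) / (1 - π₀ (X ω))) * (D ω - 1) * g (Y ω) (X ω) ∂ℙ
      = ∫ ω, (if D0 ω < D1 ω then g (Y0 ω) (X ω) else 0) ∂ℙ) ∧
    (∫ ω, (Z ω / π₀ (X ω) - (1 - Z ω) / (1 - π₀ (X ω))) * D ω * g (Y ω) (X ω) ∂ℙ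
      = ∫ ω, (if D0 ω < D1 ω then g (Y1 ω) (X ω) else 0) ∂ℙ) :=
  kappa_weighting_identifies_complier_expectations_general X hX Z hZ hZ01 π₀ hπ hcond c hc0 hover Y0
    Y1 hY0 hY1 D0 D1 hD0 hD1 hD001 hD101 hindep hmono D hD Y hY g hg hgbdd
end

section
/- Under the Identification assumption, if 𝔼[(Y⁽⁰⁾)²] < ∞ and 𝔼[(Y⁽¹⁾)²] < ∞, then the expanded Wald formula identifies the local average treatment effect: (a) 𝔼[γ₀ᴰ(1,X) − γ₀ᴰ(0,X)] = ℙ(D⁽¹⁾ > D⁽⁰⁾) > 0; (b) 𝔼[γ₀ʸ(1,X) − γ₀ʸ(0,X)] = 𝔼[(Y⁽¹⁾ − Y⁽⁰⁾) · 1{D⁽¹⁾ > D⁽⁰⁾}]; and consequently 𝔼[Y⁽¹⁾ − Y⁽⁰⁾ | D⁽¹⁾ > D⁽⁰⁾] = 𝔼[γ₀ʸ(1,X) − γ₀ʸ(0,X)] / 𝔼[γ₀ᴰ(1,X) − γ₀ᴰ(0,X)]. -/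
/-!
Inverse propensity weighting. Conditional independence of `Z` and the potential outcomes given
`X` means that also conditioning on the potential outcomes leaves the propensity unchanged:
`ℙ(Z = 1 | X, Y⁽⁰⁾, Y⁽¹⁾, D⁽⁰⁾, D⁽¹⁾) = π₀(X)`. On `{Z = 1}` the regression `γ(Z, X)` is
`γ(1, X)`, so `γ(1, X) = 𝔼[1{Z = 1} Y / π₀(X) | X]`; and since `Y` agrees on `{Z = 1}` with a
function `V₁` of the potential outcomes, `𝔼[γ(1, X)] = 𝔼[1{Z = 1} V₁ / π₀(X)] = 𝔼[V₁]`. The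
control arm is the same with `1 - π₀(X)`; overlap keeps both weights bounded. For
`V_z = D⁽ᶻ⁾` and `V_z = D⁽ᶻ⁾ Y⁽¹⁾ + (1 - D⁽ᶻ⁾) Y⁽⁰⁾` the two contrasts are `𝔼[D⁽¹⁾ - D⁽⁰⁾]` and
`𝔼[(D⁽¹⁾ - D⁽⁰⁾)(Y⁽¹⁾ - Y⁽⁰⁾)]`, and monotonicity makes `D⁽¹⁾ - D⁽⁰⁾` the complier indicator.
-/

open MeasureTheory ProbabilityTheory

section

variable {Ω : Type*} {m m' m₁ m₂ mΩ : MeasurableSpace Ω} {μ : Measure Ω}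

theorem setIntegral_eq_setIntegral_of_isPiSystem {E : Type*} [NormedAddCommGroup E]
    [NormedSpace ℝ E] {s : Set (Set Ω)} (hm : m ≤ mΩ) (h_eq : m = MeasurableSpace.generateFrom s)
    (h_inter : IsPiSystem s) {f g : Ω → E} (hf : Integrable f μ) (hg : Integrable g μ)
    (h_univ : ∫ x, f x ∂μ = ∫ x, g x ∂μ) (basic : ∀ t ∈ s, ∫ x in t, f x ∂μ = ∫ x in t, g x ∂μ)
    {t : Set Ω} (ht : MeasurableSet[m] t) : ∫ x in t, f x ∂μ = ∫ x in t, g x ∂μ := by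
  induction t, ht using MeasurableSpace.induction_on_inter h_eq h_inter with
  | empty => simp
  | basic t ht => exact basic t ht
  | compl t ht h => rw [setIntegral_compl (hm t ht) hf, setIntegral_compl (hm t ht) hg, h, h_univ]
  | iUnion u hdisj hu h =>
    rw [integral_iUnion (fun i => hm _ (hu i)) hdisj hf.integrableOn,
      integral_iUnion (fun i => hm _ (hu i)) hdisj hg.integrableOn]
    exact tsum_congr h

theorem sup_eq_generateFrom_inter (m₁ m₂ : MeasurableSpace Ω) :
    m₁ ⊔ m₂ = MeasurableSpace.generateFrom
      {t | ∃ a c, MeasurableSet[m₁] a ∧ MeasurableSet[m₂] c ∧ t = a ∩ c} := by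
  refine le_antisymm (sup_le ?_ ?_) (MeasurableSpace.generateFrom_le ?_)
  · exact fun a ha => MeasurableSpace.measurableSet_generateFrom ⟨a, _, ha, .univ, by simp⟩
  · exact fun c hc => MeasurableSpace.measurableSet_generateFrom ⟨_, c, .univ, hc, by simp⟩
  · rintro _ ⟨a, c, ha, hc, rfl⟩
    exact (le_sup_left (b := m₂) _ ha).inter (le_sup_right (a := m₁) _ hc)

theorem isPiSystem_inter (m₁ m₂ : MeasurableSpace Ω) :
    IsPiSystem {t | ∃ a c, MeasurableSet[m₁] a ∧ MeasurableSet[m₂] c ∧ t = a ∩ c} := by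
  rintro _ ⟨a, c, ha, hc, rfl⟩ _ ⟨a', c', ha', hc', rfl⟩ -
  exact ⟨a ∩ a', c ∩ c', ha.inter ha', hc.inter hc', by rw [Set.inter_inter_inter_comm]⟩

theorem Set.indicator_eq_mul_indicator_one (s : Set Ω) (f : Ω → ℝ) :
    s.indicator f = f * s.indicator fun _ => 1 := by
  ext ω; by_cases hω : ω ∈ s <;> simp [hω]

theorem condExp_indicator_sup_ae_eq_of_condIndep [StandardBorelSpace Ω] [IsFiniteMeasure μ]
    (hm : m ≤ mΩ) (hm₁ : m₁ ≤ mΩ) (hm₂ : m₂ ≤ mΩ) (h : CondIndep m m₁ m₂ hm μ) {B : Set Ω}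
    (hB : MeasurableSet[m₂] B) : μ⟦B | m ⊔ m₁⟧ =ᵐ[μ] μ⟦B | m⟧ := by
  have hone : ∀ {s : Set Ω}, MeasurableSet s → Integrable (s.indicator fun _ => (1 : ℝ)) μ :=
    fun hs => (integrable_const 1).indicator hs
  have hmeas : StronglyMeasurable[m ⊔ m₁] (μ⟦B | m⟧) :=
    stronglyMeasurable_condExp.mono le_sup_left
  refine (ae_eq_condExp_of_forall_setIntegral_eq (sup_le hm hm₁) (hone (hm₂ B hB))
    (fun _ _ _ => integrable_condExp.integrableOn) (fun t ht _ => ?_)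
    hmeas.aestronglyMeasurable).symm
  refine setIntegral_eq_setIntegral_of_isPiSystem (sup_le hm hm₁) (sup_eq_generateFrom_inter m m₁)
    (isPiSystem_inter m m₁) integrable_condExp (hone (hm₂ B hB)) (integral_condExp hm) ?_ ht
  rintro _ ⟨a, c, ha, hc, rfl⟩
  have hc' : MeasurableSet c := hm₁ c hc
  have hcB : Integrable (μ⟦B | m⟧ * c.indicator fun _ => 1) μ :=
    Set.indicator_eq_mul_indicator_one c _ ▸ integrable_condExp.indicator hc'
  have hpull : μ[μ⟦B | m⟧ * c.indicator (fun _ => 1) | m] =ᵐ[μ] μ⟦c ∩ B | m⟧ := by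
    filter_upwards [condExp_mul_of_stronglyMeasurable_left stronglyMeasurable_condExp hcB
      (hone hc'), (condIndep_iff m m₁ m₂ hm hm₁ hm₂ μ).1 h c B hc hB] with x h₁ h₂
    rw [h₁, h₂, Pi.mul_apply, Pi.mul_apply, mul_comm]
  calc ∫ x in a ∩ c, (μ⟦B | m⟧) x ∂μ
    _ = ∫ x in a, (μ⟦B | m⟧ * c.indicator fun _ => 1 : Ω → ℝ) x ∂μ := by
        rw [← Set.indicator_eq_mul_indicator_one, setIntegral_indicator hc']
    _ = ∫ x in a, (μ⟦c ∩ B | m⟧) x ∂μ := by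
        rw [← setIntegral_condExp hm hcB ha]
        exact setIntegral_congr_ae (hm a ha) (hpull.mono fun x hx _ => hx)
    _ = ∫ x in a ∩ c, B.indicator (fun _ => (1 : ℝ)) x ∂μ := by
        rw [setIntegral_condExp hm (hone (hc'.inter (hm₂ B hB))) ha, ← Set.indicator_indicator,
          setIntegral_indicator hc']

theorem condExp_preimage_one_sup_ae_eq {β : Type*} [MeasurableSpace β] [StandardBorelSpace Ω]
    [IsFiniteMeasure μ] (hm : m ≤ mΩ) {F : Ω → β} (hF : Measurable F) {Z : Ω → ℝ}
    (hZ : Measurable Z) (hZ01 : ∀ ω, Z ω = 0 ∨ Z ω = 1) (hindep : CondIndepFun m hm F Z μ) :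
    μ⟦Z ⁻¹' {1} | m ⊔ MeasurableSpace.comap F inferInstance⟧ =ᵐ[μ] μ[Z | m] := by
  have hZ_eq : (Z ⁻¹' {1}).indicator (fun _ => (1 : ℝ)) = Z := by
    ext ω; rcases hZ01 ω with h | h <;> simp [h]
  refine (condExp_indicator_sup_ae_eq_of_condIndep hm hF.comap_le hZ.comap_le
    ((condIndepFun_iff_condIndep m hm F Z μ).1 hindep)
    ⟨{1}, measurableSet_singleton 1, rfl⟩).trans ?_
  rw [hZ_eq]

theorem MeasureTheory.Integrable.div_of_le {V q : Ω → ℝ} (hV : Integrable V μ)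
    (hq : AEMeasurable q μ) {c : ℝ} (hc : 0 < c) (hcq : ∀ᵐ ω ∂μ, c ≤ q ω) :
    Integrable (V / q) μ := by
  rw [div_eq_inv_mul]
  refine hV.bdd_mul hq.inv.aestronglyMeasurable (c := c⁻¹) ?_
  filter_upwards [hcq] with ω hω
  rw [Pi.inv_apply, norm_inv, Real.norm_of_nonneg (hc.le.trans hω)]
  exact inv_anti₀ hc hω

theorem condExp_indicator_compl_ae_eq [IsFiniteMeasure μ] (hm : m ≤ mΩ) {A : Set Ω}
    (hA : MeasurableSet A) : μ⟦Aᶜ | m⟧ =ᵐ[μ] 1 - μ⟦A | m⟧ := by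
  rw [Set.indicator_compl]
  filter_upwards [condExp_sub (integrable_const (1 : ℝ)) ((integrable_const 1).indicator hA) m]
    with ω h
  rw [h, condExp_const hm]
  rfl

theorem integral_indicator_div_eq_of_condExp [IsFiniteMeasure μ] (hm : m ≤ mΩ) {A : Set Ω}
    (hA : MeasurableSet A) {q : Ω → ℝ} (hq : Measurable[m] q) {c : ℝ} (hc : 0 < c)
    (hcq : ∀ᵐ ω ∂μ, c ≤ q ω) (hAq : μ⟦A | m⟧ =ᵐ[μ] q) {V : Ω → ℝ} (hV : Measurable[m] V)
    (hVi : Integrable V μ) :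
    ∫ ω, A.indicator (V / q) ω ∂μ = ∫ ω, V ω ∂μ := by
  have hpull := condExp_mul_of_stronglyMeasurable_left (hV.div hq).stronglyMeasurable
    (Set.indicator_eq_mul_indicator_one A _ ▸
      (hVi.div_of_le (hq.mono hm le_rfl).aemeasurable hc hcq).indicator hA)
    ((integrable_const 1).indicator hA)
  calc ∫ ω, A.indicator (V / q) ω ∂μ
    _ = ∫ ω, μ[(V / q) * A.indicator fun _ => 1 | m] ω ∂μ := by
        rw [integral_condExp hm, Set.indicator_eq_mul_indicator_one]
    _ = ∫ ω, V ω ∂μ := by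
        refine integral_congr_ae ?_
        filter_upwards [hpull, hAq, hcq] with ω h hAω hcω
        rw [h, Pi.mul_apply, hAω, Pi.div_apply, div_mul_cancel₀ _ (hc.trans_le hcω).ne']

theorem ae_eq_condExp_indicator_div [IsFiniteMeasure μ] (hmm' : m ≤ m') (hm' : m' ≤ mΩ)
    {A : Set Ω} (hA : MeasurableSet[m'] A) {q : Ω → ℝ} (hq : Measurable[m] q) {c : ℝ}
    (hc : 0 < c) (hcq : ∀ᵐ ω ∂μ, c ≤ q ω) (hAq : μ⟦A | m⟧ =ᵐ[μ] q) {Y : Ω → ℝ}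
    (hY : Integrable Y μ) {k : Ω → ℝ} (hk : Measurable[m] k)
    (hYk : ∀ᵐ ω ∂μ, ω ∈ A → μ[Y | m'] ω = k ω) :
    k =ᵐ[μ] μ[A.indicator (Y / q) | m] := by
  have hA' : MeasurableSet A := hm' A hA
  have hYA : μ[A.indicator Y | m'] =ᵐ[μ] A.indicator k := by
    filter_upwards [condExp_indicator hY hA, hYk] with ω h hω
    rw [h]
    by_cases hωA : ω ∈ A <;> simp [hωA, hω]
  have hYAm : μ[A.indicator Y | m] =ᵐ[μ] k * q := by
    have hkA : Integrable (k * A.indicator fun _ => 1) μ :=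
      Set.indicator_eq_mul_indicator_one A k ▸ integrable_condExp.congr hYA
    filter_upwards [(condExp_condExp_of_le (f := A.indicator Y) hmm' hm').symm,
      condExp_congr_ae (m := m) hYA,
      condExp_mul_of_stronglyMeasurable_left hk.stronglyMeasurable hkA
        ((integrable_const 1).indicator hA'), hAq] with ω h₁ h₂ h₃ h₄
    rw [h₁, h₂, Set.indicator_eq_mul_indicator_one A k, h₃, Pi.mul_apply, h₄, Pi.mul_apply]
  have hdiv : A.indicator (Y / q) = q⁻¹ * A.indicator Y := by
    ext ω; by_cases hω : ω ∈ A <;> simp [hω, div_eq_inv_mul]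
  have hpull := condExp_mul_of_stronglyMeasurable_left hq.inv.stronglyMeasurable
    (hdiv ▸ (hY.div_of_le ((hq.mono (hmm'.trans hm') le_rfl).aemeasurable) hc hcq).indicator hA')
    (hY.indicator hA')
  filter_upwards [hpull, hYAm, hcq] with ω h₁ h₂ hcω
  rw [hdiv, h₁, Pi.mul_apply, h₂, Pi.mul_apply, Pi.inv_apply, mul_comm (k ω),
    inv_mul_cancel_left₀ (hc.trans_le hcω).ne']

theorem integral_eq_of_condExp_indicator [IsFiniteMeasure μ] (hmm' : m ≤ m') (hm' : m' ≤ mΩ)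
    (hmm₂ : m ≤ m₂) (hm₂ : m₂ ≤ mΩ) {A : Set Ω} (hA : MeasurableSet[m'] A) {q : Ω → ℝ}
    (hq : Measurable[m] q) {c : ℝ} (hc : 0 < c) (hcq : ∀ᵐ ω ∂μ, c ≤ q ω)
    (hAq : μ⟦A | m₂⟧ =ᵐ[μ] q) {Y : Ω → ℝ} (hY : Integrable Y μ) {k : Ω → ℝ}
    (hk : Measurable[m] k) (hYk : ∀ᵐ ω ∂μ, ω ∈ A → μ[Y | m'] ω = k ω) {V : Ω → ℝ}
    (hV : Measurable[m₂] V) (hVi : Integrable V μ) (hYV : ∀ ω ∈ A, Y ω = V ω) :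
    Integrable k μ ∧ ∫ ω, k ω ∂μ = ∫ ω, V ω ∂μ := by
  have hAq_m : μ⟦A | m⟧ =ᵐ[μ] q := by
    have hqm : μ[q | m] = q := condExp_of_stronglyMeasurable (hmm₂.trans hm₂)
      hq.stronglyMeasurable (integrable_condExp.congr hAq)
    filter_upwards [(condExp_condExp_of_le (f := A.indicator fun _ => (1 : ℝ)) hmm₂ hm₂).symm,
      condExp_congr_ae (m := m) hAq] with ω h₁ h₂
    rw [h₁, h₂, hqm]
  have hk_eq := ae_eq_condExp_indicator_div hmm' hm' hA hq hc hcq hAq_m hY hk hYk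
  have hYV_div : A.indicator (Y / q) = A.indicator (V / q) :=
    Set.indicator_congr fun ω hω => by rw [Pi.div_apply, Pi.div_apply, hYV ω hω]
  refine ⟨integrable_condExp.congr hk_eq.symm, ?_⟩
  rw [integral_congr_ae hk_eq, integral_condExp (hmm'.trans hm'), hYV_div]
  exact integral_indicator_div_eq_of_condExp hm₂ (hm' A hA) (hq.mono hmm₂ le_rfl) hc hcq hAq hV hVi

theorem integral_sub_slices_eq_of_condIndepFun {𝒳 β : Type*} [MeasurableSpace 𝒳]
    [MeasurableSpace β] [StandardBorelSpace Ω] [IsFiniteMeasure μ] {X : Ω → 𝒳}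
    (hX : Measurable X) {Z : Ω → ℝ} (hZ : Measurable Z) (hZ01 : ∀ ω, Z ω = 0 ∨ Z ω = 1)
    {π₀ : 𝒳 → ℝ} (hπ : Measurable π₀)
    (hcond : μ[Z | MeasurableSpace.comap X inferInstance] =ᵐ[μ] fun ω => π₀ (X ω)) {c : ℝ}
    (hc : 0 < c) (hover : ∀ᵐ ω ∂μ, c ≤ π₀ (X ω) ∧ π₀ (X ω) ≤ 1 - c) {F : Ω → β}
    (hF : Measurable F) (hindep : CondIndepFun (MeasurableSpace.comap X inferInstance)
      hX.comap_le F Z μ)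
    {Y : Ω → ℝ} (hY : Integrable Y μ) {γ : ℝ → 𝒳 → ℝ}
    (hγ : Measurable fun p : ℝ × 𝒳 => γ p.1 p.2)
    (hYγ : ∀ᵐ ω ∂μ,
      μ[Y | MeasurableSpace.comap (fun ω => (Z ω, X ω)) inferInstance] ω = γ (Z ω) (X ω))
    {v₁ v₀ : β → ℝ} (hv₁ : Measurable v₁) (hv₀ : Measurable v₀)
    (hv₁i : Integrable (fun ω => v₁ (F ω)) μ) (hv₀i : Integrable (fun ω => v₀ (F ω)) μ)
    (hYv₁ : ∀ ω, Z ω = 1 → Y ω = v₁ (F ω)) (hYv₀ : ∀ ω, Z ω = 0 → Y ω = v₀ (F ω)) :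
    ∫ ω, (γ 1 (X ω) - γ 0 (X ω)) ∂μ = ∫ ω, (v₁ (F ω) - v₀ (F ω)) ∂μ := by
  have hZX : Measurable[MeasurableSpace.comap (fun ω => (Z ω, X ω)) inferInstance]
      fun ω => (Z ω, X ω) := comap_measurable _
  have hXZX : MeasurableSpace.comap X inferInstance
      ≤ MeasurableSpace.comap (fun ω => (Z ω, X ω)) inferInstance :=
    (measurable_snd.comp hZX).comap_le
  have hA : MeasurableSet[MeasurableSpace.comap (fun ω => (Z ω, X ω)) inferInstance]
      (Z ⁻¹' {1}) := (measurable_fst.comp hZX) (measurableSet_singleton 1)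
  have hslice : ∀ z, Measurable[MeasurableSpace.comap X inferInstance] fun ω => γ z (X ω) :=
    fun z => hγ.comp (measurable_const.prodMk (comap_measurable X))
  have hπX : Measurable[MeasurableSpace.comap X inferInstance] fun ω => π₀ (X ω) :=
    hπ.comp (comap_measurable X)
  have hvF : ∀ {v : β → ℝ}, Measurable v → Measurable[MeasurableSpace.comap X inferInstance
      ⊔ MeasurableSpace.comap F inferInstance] fun ω => v (F ω) :=
    fun hv => (hv.comp (comap_measurable F)).mono le_sup_right le_rfl
  have hm₂ := sup_le hX.comap_le hF.comap_le
  have hZq := (condExp_preimage_one_sup_ae_eq hX.comap_le hF hZ hZ01 hindep).trans hcond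
  have hZ0 : ∀ ω, ω ∉ Z ⁻¹' {1} → Z ω = 0 := fun ω hω => (hZ01 ω).resolve_right hω
  have hZq₀ : μ⟦(Z ⁻¹' {1})ᶜ | MeasurableSpace.comap X inferInstance
      ⊔ MeasurableSpace.comap F inferInstance⟧ =ᵐ[μ] fun ω => 1 - π₀ (X ω) := by
    filter_upwards [condExp_indicator_compl_ae_eq hm₂ (hZ (measurableSet_singleton 1)), hZq]
      with ω h₁ h₂
    rw [h₁, Pi.sub_apply, h₂]
    rfl
  obtain ⟨hk₁i, h₁⟩ := integral_eq_of_condExp_indicator hXZX (hZ.prodMk hX).comap_le le_sup_left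
    hm₂ hA hπX hc (hover.mono fun _ h => h.1) hZq hY (hslice 1)
    (hYγ.mono fun ω h hω => by rwa [show Z ω = 1 from hω] at h) (hvF hv₁) hv₁i hYv₁
  obtain ⟨hk₀i, h₀⟩ := integral_eq_of_condExp_indicator hXZX (hZ.prodMk hX).comap_le le_sup_left
    hm₂ hA.compl (q := fun ω => 1 - π₀ (X ω)) (measurable_const.sub hπX) hc
    (hover.mono fun _ h => by linarith [h.2]) hZq₀ hY (hslice 0)
    (hYγ.mono fun ω h hω => by rwa [hZ0 ω hω] at h) (hvF hv₀) hv₀i fun ω hω => hYv₀ ω (hZ0 ω hω)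
  rw [integral_sub hk₁i hk₀i, integral_sub hv₁i hv₀i, h₁, h₀]

theorem integrable_mul_add_one_sub_mul {E Y₁ Y₀ : Ω → ℝ} (hE : AEStronglyMeasurable E μ)
    (hE01 : ∀ᵐ ω ∂μ, E ω ∈ Set.Icc 0 1) (h₁ : Integrable Y₁ μ) (h₀ : Integrable Y₀ μ) :
    Integrable (fun ω => E ω * Y₁ ω + (1 - E ω) * Y₀ ω) μ := by
  refine (h₁.bdd_mul hE (c := 1) ?_).add
    (h₀.bdd_mul (aestronglyMeasurable_const.sub hE) (c := 1) ?_)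
  all_goals
    filter_upwards [hE01] with ω h
    rw [Real.norm_eq_abs, abs_le]
    constructor <;> linarith [h.1, h.2]

theorem sub_eq_ite_of_zero_or_one {a b : ℝ} (ha : a = 0 ∨ a = 1) (hb : b = 0 ∨ b = 1)
    (hab : a ≤ b) : b - a = if a < b then 1 else 0 := by
  rcases ha with rfl | rfl <;> rcases hb with rfl | rfl <;> norm_num at *

theorem integral_sub_eq_measureReal_lt {D₀ D₁ : Ω → ℝ}
    (hD₀ : Measurable D₀) (hD₁ : Measurable D₁) (hD₀01 : ∀ ω, D₀ ω = 0 ∨ D₀ ω = 1)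
    (hD₁01 : ∀ ω, D₁ ω = 0 ∨ D₁ ω = 1) (hmono : ∀ᵐ ω ∂μ, D₀ ω ≤ D₁ ω) :
    ∫ ω, (D₁ ω - D₀ ω) ∂μ = μ.real {ω | D₀ ω < D₁ ω} := by
  rw [← integral_indicator_one (measurableSet_lt hD₀ hD₁)]
  refine integral_congr_ae (hmono.mono fun ω h => ?_)
  simp only [Set.indicator_apply, Set.mem_ofPred_eq, Pi.one_apply]
  exact sub_eq_ite_of_zero_or_one (hD₀01 ω) (hD₁01 ω) h

theorem integral_sub_eq_integral_ite_lt {D₀ D₁ Y₀ Y₁ : Ω → ℝ}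
    (hD₀01 : ∀ ω, D₀ ω = 0 ∨ D₀ ω = 1) (hD₁01 : ∀ ω, D₁ ω = 0 ∨ D₁ ω = 1)
    (hmono : ∀ᵐ ω ∂μ, D₀ ω ≤ D₁ ω) :
    ∫ ω, (D₁ ω * Y₁ ω + (1 - D₁ ω) * Y₀ ω - (D₀ ω * Y₁ ω + (1 - D₀ ω) * Y₀ ω)) ∂μ
      = ∫ ω, (if D₀ ω < D₁ ω then Y₁ ω - Y₀ ω else 0) ∂μ := by
  refine integral_congr_ae (hmono.mono fun ω h => ?_)
  calc _ = (D₁ ω - D₀ ω) * (Y₁ ω - Y₀ ω) := by ring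
    _ = _ := by rw [sub_eq_ite_of_zero_or_one (hD₀01 ω) (hD₁01 ω) h, ite_mul, one_mul, zero_mul]

theorem integral_cond_eq_inv_mul (μ : Measure Ω) (s : Set Ω) (f : Ω → ℝ) :
    ∫ ω, f ω ∂μ[|s] = (μ.real s)⁻¹ * ∫ ω in s, f ω ∂μ := by
  rw [ProbabilityTheory.cond, integral_smul_measure, ENNReal.toReal_inv, smul_eq_mul]
  rfl

end

theorem expanded_wald_identifies_late_general
    {Ω 𝒳 : Type*} [MeasureSpace Ω] [IsProbabilityMeasure (ℙ : Measure Ω)]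
    [StandardBorelSpace Ω] [MeasurableSpace 𝒳]
    (X : Ω → 𝒳) (hX : Measurable X)
    (Z : Ω → ℝ) (hZ : Measurable Z) (hZ01 : ∀ ω, Z ω = 0 ∨ Z ω = 1)
    (π₀ : 𝒳 → ℝ) (hπ : Measurable π₀)
    (hcond : ∀ᵐ ω ∂ℙ, (ℙ[Z | MeasurableSpace.comap X inferInstance]) ω = π₀ (X ω))
    (c : ℝ) (hc0 : 0 < c)
    (hover : ∀ᵐ ω ∂ℙ, c ≤ π₀ (X ω) ∧ π₀ (X ω) ≤ 1 - c)
    (Y0 Y1 : Ω → ℝ) (hY0 : Measurable Y0) (hY1 : Measurable Y1)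
    (hY0sq : Integrable (fun ω => (Y0 ω) ^ 2) ℙ)
    (hY1sq : Integrable (fun ω => (Y1 ω) ^ 2) ℙ)
    (D0 D1 : Ω → ℝ) (hD0 : Measurable D0) (hD1 : Measurable D1)
    (hD001 : ∀ ω, D0 ω = 0 ∨ D0 ω = 1) (hD101 : ∀ ω, D1 ω = 0 ∨ D1 ω = 1)
    (hindep : CondIndepFun (MeasurableSpace.comap X inferInstance) hX.comap_le
      (fun ω => (Y0 ω, Y1 ω, D0 ω, D1 ω)) Z ℙ)
    (hmono : ∀ᵐ ω ∂ℙ, D0 ω ≤ D1 ω)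
    (hcompliers : 0 < ℙ {ω | D0 ω < D1 ω})
    (D : Ω → ℝ) (hD : ∀ ω, D ω = Z ω * D1 ω + (1 - Z ω) * D0 ω)
    (Y : Ω → ℝ) (hY : ∀ ω, Y ω = D ω * Y1 ω + (1 - D ω) * Y0 ω)
    (γY γD : ℝ → 𝒳 → ℝ)
    (hγY : Measurable (fun p : ℝ × 𝒳 => γY p.1 p.2))
    (hγD : Measurable (fun p : ℝ × 𝒳 => γD p.1 p.2))
    (hγYcond : ∀ᵐ ω ∂ℙ,
      (ℙ[Y | MeasurableSpace.comap (fun ω' => (Z ω', X ω')) inferInstance]) ω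
        = γY (Z ω) (X ω))
    (hγDcond : ∀ᵐ ω ∂ℙ,
      (ℙ[D | MeasurableSpace.comap (fun ω' => (Z ω', X ω')) inferInstance]) ω
        = γD (Z ω) (X ω)) :
    (∫ ω, (γD 1 (X ω) - γD 0 (X ω)) ∂ℙ = (ℙ {ω | D0 ω < D1 ω}).toReal
      ∧ 0 < ∫ ω, (γD 1 (X ω) - γD 0 (X ω)) ∂ℙ) ∧
    (∫ ω, (γY 1 (X ω) - γY 0 (X ω)) ∂ℙ
      = ∫ ω, (if D0 ω < D1 ω then Y1 ω - Y0 ω else 0) ∂ℙ) ∧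
    (∫ ω, (Y1 ω - Y0 ω) ∂(ProbabilityTheory.cond ℙ {ω | D0 ω < D1 ω})
      = (∫ ω, (γY 1 (X ω) - γY 0 (X ω)) ∂ℙ) / (∫ ω, (γD 1 (X ω) - γD 0 (X ω)) ∂ℙ)) := by
  have hIcc : ∀ {E : Ω → ℝ}, (∀ ω, E ω = 0 ∨ E ω = 1) → ∀ᵐ ω ∂ℙ, E ω ∈ Set.Icc (0 : ℝ) 1 :=
    fun h => ae_of_all _ fun ω => by rcases h ω with h | h <;> simp [h]
  have hbin : ∀ {E : Ω → ℝ}, Measurable E → (∀ ω, E ω = 0 ∨ E ω = 1) → Integrable E ℙ :=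
    fun hE h => .of_bound hE.aestronglyMeasurable 1
      (ae_of_all _ fun ω => by rcases h ω with h | h <;> simp [h])
  have hY0i := ((memLp_two_iff_integrable_sq hY0.aestronglyMeasurable).2 hY0sq).integrable
    one_le_two
  have hY1i := ((memLp_two_iff_integrable_sq hY1.aestronglyMeasurable).2 hY1sq).integrable
    one_le_two
  have hD01 : ∀ ω, D ω = 0 ∨ D ω = 1 := fun ω => by
    rcases hZ01 ω with h | h <;> simp [hD ω, h, hD001 ω, hD101 ω]
  have hDi : Integrable D ℙ := funext hD ▸ integrable_mul_add_one_sub_mul hZ.aestronglyMeasurable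
    (hIcc hZ01) (hbin hD1 hD101) (hbin hD0 hD001)
  have hYi : Integrable Y ℙ := funext hY ▸ integrable_mul_add_one_sub_mul
    hDi.aestronglyMeasurable (hIcc hD01) hY1i hY0i
  have hquad : Measurable fun ω => (Y0 ω, Y1 ω, D0 ω, D1 ω) := by fun_prop
  have ha : ∫ ω, (γD 1 (X ω) - γD 0 (X ω)) ∂ℙ = (ℙ {ω | D0 ω < D1 ω}).toReal := by
    rw [integral_sub_slices_eq_of_condIndepFun hX hZ hZ01 hπ hcond hc0 hover hquad hindep hDi hγD
      hγDcond (v₁ := fun t => t.2.2.2) (v₀ := fun t => t.2.2.1) (by fun_prop) (by fun_prop)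
      (hbin hD1 hD101) (hbin hD0 hD001) (fun ω h => by rw [hD, h]; ring)
      (fun ω h => by rw [hD, h]; ring)]
    exact integral_sub_eq_measureReal_lt hD0 hD1 hD001 hD101 hmono
  have hb : ∫ ω, (γY 1 (X ω) - γY 0 (X ω)) ∂ℙ
      = ∫ ω, (if D0 ω < D1 ω then Y1 ω - Y0 ω else 0) ∂ℙ := by
    rw [integral_sub_slices_eq_of_condIndepFun hX hZ hZ01 hπ hcond hc0 hover hquad hindep hYi hγY
      hγYcond (v₁ := fun t => t.2.2.2 * t.2.1 + (1 - t.2.2.2) * t.1)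
      (v₀ := fun t => t.2.2.1 * t.2.1 + (1 - t.2.2.1) * t.1) (by fun_prop) (by fun_prop)
      (integrable_mul_add_one_sub_mul hD1.aestronglyMeasurable (hIcc hD101) hY1i hY0i)
      (integrable_mul_add_one_sub_mul hD0.aestronglyMeasurable (hIcc hD001) hY1i hY0i)
      (fun ω h => by rw [hY, hD, h]; ring) (fun ω h => by rw [hY, hD, h]; ring)]
    exact integral_sub_eq_integral_ite_lt hD001 hD101 hmono
  refine ⟨⟨ha, ha ▸ ENNReal.toReal_pos hcompliers.ne' (measure_ne_top _ _)⟩, hb, ?_⟩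
  rw [integral_cond_eq_inv_mul, hb, ha, ← integral_indicator (measurableSet_lt hD0 hD1),
    measureReal_def, inv_mul_eq_div]
  rfl

/-- Under the IV identification assumption, with square-integrable potential outcomes,
the expanded Wald formula identifies LATE:
(a) `𝔼[γ₀ᴰ(1,X) − γ₀ᴰ(0,X)] = ℙ(D⁽¹⁾ > D⁽⁰⁾) > 0`;
(b) `𝔼[γ₀ʸ(1,X) − γ₀ʸ(0,X)] = 𝔼[(Y⁽¹⁾ − Y⁽⁰⁾)·1{D⁽¹⁾ > D⁽⁰⁾}]`;
(c) `𝔼[Y⁽¹⁾ − Y⁽⁰⁾ | D⁽¹⁾ > D⁽⁰⁾]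
      = 𝔼[γ₀ʸ(1,X) − γ₀ʸ(0,X)] / 𝔼[γ₀ᴰ(1,X) − γ₀ᴰ(0,X)]`. -/
theorem expanded_wald_identifies_late
    {Ω 𝒳 : Type*} [MeasureSpace Ω] [IsProbabilityMeasure (ℙ : Measure Ω)]
    [StandardBorelSpace Ω] [Nonempty Ω] [MeasurableSpace 𝒳]
    (X : Ω → 𝒳) (hX : Measurable X)
    (Z : Ω → ℝ) (hZ : Measurable Z) (hZ01 : ∀ ω, Z ω = 0 ∨ Z ω = 1)
    (π₀ : 𝒳 → ℝ) (hπ : Measurable π₀)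
    (hcond : ∀ᵐ ω ∂ℙ, (ℙ[Z | MeasurableSpace.comap X inferInstance]) ω = π₀ (X ω))
    (c : ℝ) (hc0 : 0 < c) (hc2 : c ≤ 1/2)
    (hover : ∀ᵐ ω ∂ℙ, c ≤ π₀ (X ω) ∧ π₀ (X ω) ≤ 1 - c)
    (Y0 Y1 : Ω → ℝ) (hY0 : Measurable Y0) (hY1 : Measurable Y1)
    (hY0sq : Integrable (fun ω => (Y0 ω) ^ 2) ℙ)
    (hY1sq : Integrable (fun ω => (Y1 ω) ^ 2) ℙ)
    (D0 D1 : Ω → ℝ) (hD0 : Measurable D0) (hD1 : Measurable D1)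
    (hD001 : ∀ ω, D0 ω = 0 ∨ D0 ω = 1) (hD101 : ∀ ω, D1 ω = 0 ∨ D1 ω = 1)
    (hindep : CondIndepFun (MeasurableSpace.comap X inferInstance) hX.comap_le
      (fun ω => (Y0 ω, Y1 ω, D0 ω, D1 ω)) Z ℙ)
    (hmono : ∀ᵐ ω ∂ℙ, D0 ω ≤ D1 ω)
    (hcompliers : 0 < ℙ {ω | D0 ω < D1 ω})
    (D : Ω → ℝ) (hD : ∀ ω, D ω = Z ω * D1 ω + (1 - Z ω) * D0 ω)
    (Y : Ω → ℝ) (hY : ∀ ω, Y ω = D ω * Y1 ω + (1 - D ω) * Y0 ω)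
    (γY γD : ℝ → 𝒳 → ℝ)
    (hγY : Measurable (fun p : ℝ × 𝒳 => γY p.1 p.2))
    (hγD : Measurable (fun p : ℝ × 𝒳 => γD p.1 p.2))
    (hγYcond : ∀ᵐ ω ∂ℙ,
      (ℙ[Y | MeasurableSpace.comap (fun ω' => (Z ω', X ω')) inferInstance]) ω
        = γY (Z ω) (X ω))
    (hγDcond : ∀ᵐ ω ∂ℙ,
      (ℙ[D | MeasurableSpace.comap (fun ω' => (Z ω', X ω')) inferInstance]) ω
        = γD (Z ω) (X ω)) :
    (∫ ω, (γD 1 (X ω) - γD 0 (X ω)) ∂ℙ = (ℙ {ω | D0 ω < D1 ω}).toReal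
      ∧ 0 < ∫ ω, (γD 1 (X ω) - γD 0 (X ω)) ∂ℙ) ∧
    (∫ ω, (γY 1 (X ω) - γY 0 (X ω)) ∂ℙ
      = ∫ ω, (if D0 ω < D1 ω then Y1 ω - Y0 ω else 0) ∂ℙ) ∧
    (∫ ω, (Y1 ω - Y0 ω) ∂(ProbabilityTheory.cond ℙ {ω | D0 ω < D1 ω})
      = (∫ ω, (γY 1 (X ω) - γY 0 (X ω)) ∂ℙ) / (∫ ω, (γD 1 (X ω) - γD 0 (X ω)) ∂ℙ)) :=
  expanded_wald_identifies_late_general X hX Z hZ hZ01 π₀ hπ hcond c hc0 hover Y0 Y1 hY0 hY1 hY0sq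
    hY1sq D0 D1 hD0 hD1 hD001 hD101 hindep hmono hcompliers D hD Y hY γY γD hγY hγD hγYcond hγDcond
end

section
/- For every measurable function γ : {0,1} × 𝒳 → ℝ with 𝔼[γ(Z,X)²] < ∞, the functional γ ↦ γ(1,X) − γ(0,X) is mean-square continuous: 𝔼[(γ(1,X) − γ(0,X))²] ≤ (2/c̄) · 𝔼[γ(Z,X)²]. In particular, for two such functions γ and γ₀, 𝔼[((γ(1,X) − γ(0,X)) − (γ₀(1,X) − γ₀(0,X)))²] ≤ (2/c̄) · 𝔼[(γ(Z,X) − γ₀(Z,X))²]. -/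
/-!
Since `Z ∈ {0, 1}`, `γ(Z,X)² = Z γ(1,X)² + (1 - Z) γ(0,X)²`. For `f ≥ 0`, pulling `f(X)` out of
the conditional expectation given `X` yields `𝔼[Z f(X)] = 𝔼[π₀(X) f(X)] ≥ c̄ 𝔼[f(X)]`, and
likewise `𝔼[(1 - Z) f(X)] ≥ c̄ 𝔼[f(X)]`. Hence `𝔼[γ(1,X)²] + 𝔼[γ(0,X)²] ≤ 𝔼[γ(Z,X)²] / c̄`,
and `(a - b)² ≤ 2a² + 2b²` gives the bound. The second claim is the first one for `γ - γ₀`.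
-/

open MeasureTheory ProbabilityTheory

section

variable {Ω : Type*} {m m₀ : MeasurableSpace Ω} {μ : Measure Ω}

theorem integrable_and_mul_integral_le_of_le_condExp (hm : m ≤ m₀) [SigmaFinite (μ.trim hm)]
    {g W : Ω → ℝ} {c : ℝ} (hc : 0 < c) (hg : StronglyMeasurable[m] g) (hg₀ : 0 ≤ᵐ[μ] g)
    (hW : Integrable W μ) (hgW : Integrable (g * W) μ) (hcW : ∀ᵐ ω ∂μ, c ≤ μ[W | m] ω) :
    Integrable g μ ∧ c * ∫ ω, g ω ∂μ ≤ ∫ ω, (g * W) ω ∂μ := by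
  have hle : ∀ᵐ ω ∂μ, c * g ω ≤ μ[g * W | m] ω := by
    filter_upwards [condExp_mul_of_stronglyMeasurable_left hg hgW hW, hcW, hg₀]
      with ω hpull hcω hgω
    rw [hpull, Pi.mul_apply, mul_comm c]
    exact mul_le_mul_of_nonneg_left hcω hgω
  have hg_int : Integrable g μ := by
    refine ((integrable_condExp (m := m) (f := g * W)).const_mul c⁻¹).mono'
      (hg.mono hm).aestronglyMeasurable ?_
    filter_upwards [hle, hg₀] with ω hω hgω
    rwa [Real.norm_eq_abs, abs_of_nonneg hgω, le_inv_mul_iff₀ hc]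
  refine ⟨hg_int, ?_⟩
  calc c * ∫ ω, g ω ∂μ = ∫ ω, c * g ω ∂μ := (integral_const_mul c _).symm
    _ ≤ ∫ ω, μ[g * W | m] ω ∂μ := integral_mono_ae (hg_int.const_mul c) integrable_condExp hle
    _ = ∫ ω, (g * W) ω ∂μ := integral_condExp hm

theorem one_sub_le_condExp_one_sub [IsFiniteMeasure μ] (hm : m ≤ m₀) {W : Ω → ℝ} {c : ℝ}
    (hW : Integrable W μ) (hcW : ∀ᵐ ω ∂μ, μ[W | m] ω ≤ 1 - c) :
    ∀ᵐ ω ∂μ, c ≤ μ[1 - W | m] ω := by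
  filter_upwards [condExp_sub (integrable_const 1) hW m, hcW] with ω hsub hω
  rw [Pi.one_def, hsub, Pi.sub_apply, condExp_const hm]
  linarith

theorem integral_sq_sub_le_of_overlap [IsFiniteMeasure μ] (hm : m ≤ m₀) {Z g₀ g₁ : Ω → ℝ}
    {c : ℝ} (hc : 0 < c) (hZ : Integrable Z μ) (hZ01 : ∀ᵐ ω ∂μ, Z ω = 0 ∨ Z ω = 1)
    (hg₀ : StronglyMeasurable[m] g₀) (hg₁ : StronglyMeasurable[m] g₁)
    (h₁ : ∀ᵐ ω ∂μ, c ≤ μ[Z | m] ω) (h₀ : ∀ᵐ ω ∂μ, c ≤ μ[1 - Z | m] ω)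
    (hint : Integrable (fun ω => (Z ω * g₁ ω + (1 - Z ω) * g₀ ω) ^ 2) μ) :
    ∫ ω, (g₁ ω - g₀ ω) ^ 2 ∂μ ≤ 2 / c * ∫ ω, (Z ω * g₁ ω + (1 - Z ω) * g₀ ω) ^ 2 ∂μ := by
  have hsplit : (fun ω => (Z ω * g₁ ω + (1 - Z ω) * g₀ ω) ^ 2)
      =ᵐ[μ] g₁ ^ 2 * Z + g₀ ^ 2 * (1 - Z) := by
    filter_upwards [hZ01] with ω hω
    rcases hω with h | h <;> simp [h]
  have hsplit_int := hint.congr hsplit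
  have hg₁Z : Integrable (g₁ ^ 2 * Z) μ := by
    refine hsplit_int.mono' (((hg₁.mono hm).pow 2).aestronglyMeasurable.mul hZ.1) ?_
    filter_upwards [hZ01] with ω hω
    rcases hω with h | h <;> simp [h, sq_nonneg]
  have hZ' : Integrable (1 - Z) μ := (integrable_const 1).sub hZ
  have hg₀Z : Integrable (g₀ ^ 2 * (1 - Z)) μ := by
    refine hsplit_int.mono' (((hg₀.mono hm).pow 2).aestronglyMeasurable.mul hZ'.1) ?_
    filter_upwards [hZ01] with ω hω
    rcases hω with h | h <;> simp [h, sq_nonneg]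
  obtain ⟨hI₁, hE₁⟩ := integrable_and_mul_integral_le_of_le_condExp hm hc (hg₁.pow 2)
    (.of_forall fun ω => sq_nonneg (g₁ ω)) hZ hg₁Z h₁
  obtain ⟨hI₀, hE₀⟩ := integrable_and_mul_integral_le_of_le_condExp hm hc (hg₀.pow 2)
    (.of_forall fun ω => sq_nonneg (g₀ ω)) hZ' hg₀Z h₀
  calc ∫ ω, (g₁ ω - g₀ ω) ^ 2 ∂μ ≤ ∫ ω, (2 * (g₁ ^ 2) ω + 2 * (g₀ ^ 2) ω) ∂μ := by
        refine integral_mono_of_nonneg (.of_forall fun ω => sq_nonneg _)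
          ((hI₁.const_mul 2).add (hI₀.const_mul 2)) (.of_forall fun ω => ?_)
        simp only [Pi.pow_apply]
        nlinarith [sq_nonneg (g₁ ω + g₀ ω)]
    _ = 2 * ∫ ω, (g₁ ^ 2) ω ∂μ + 2 * ∫ ω, (g₀ ^ 2) ω ∂μ := by
        rw [integral_add (hI₁.const_mul 2) (hI₀.const_mul 2), integral_const_mul,
          integral_const_mul]
    _ ≤ 2 / c * (∫ ω, (g₁ ^ 2 * Z) ω ∂μ + ∫ ω, (g₀ ^ 2 * (1 - Z) : Ω → ℝ) ω ∂μ) := by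
        rw [div_mul_eq_mul_div, le_div_iff₀ hc]
        linarith
    _ = 2 / c * ∫ ω, (Z ω * g₁ ω + (1 - Z ω) * g₀ ω) ^ 2 ∂μ := by
        rw [← integral_add hg₁Z hg₀Z, integral_congr_ae hsplit]
        rfl

theorem integrable_sq_sub {f g : Ω → ℝ}
    (hf : AEStronglyMeasurable f μ) (hg : AEStronglyMeasurable g μ)
    (hf₂ : Integrable (fun ω => f ω ^ 2) μ) (hg₂ : Integrable (fun ω => g ω ^ 2) μ) :
    Integrable (fun ω => (f ω - g ω) ^ 2) μ :=
  (memLp_two_iff_integrable_sq (hf.sub hg)).1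
    (((memLp_two_iff_integrable_sq hf).2 hf₂).sub ((memLp_two_iff_integrable_sq hg).2 hg₂))

end

theorem integral_sq_sub_comp_le_of_overlap {Ω 𝒳 : Type*} [MeasurableSpace 𝒳]
    [MeasurableSpace Ω] {μ : Measure Ω} [IsFiniteMeasure μ] {X : Ω → 𝒳} {Z : Ω → ℝ} {c : ℝ}
    (hX : Measurable X) (hZ : Integrable Z μ) (hZ01 : ∀ ω, Z ω = 0 ∨ Z ω = 1) (hc : 0 < c)
    (h₁ : ∀ᵐ ω ∂μ, c ≤ μ[Z | MeasurableSpace.comap X inferInstance] ω)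
    (h₀ : ∀ᵐ ω ∂μ, c ≤ μ[1 - Z | MeasurableSpace.comap X inferInstance] ω)
    {γ : ℝ → 𝒳 → ℝ} (hγ : Measurable (Function.uncurry γ))
    (hγ_int : Integrable (fun ω => γ (Z ω) (X ω) ^ 2) μ) :
    ∫ ω, (γ 1 (X ω) - γ 0 (X ω)) ^ 2 ∂μ ≤ 2 / c * ∫ ω, γ (Z ω) (X ω) ^ 2 ∂μ := by
  have hsection (z : ℝ) :
      StronglyMeasurable[MeasurableSpace.comap X inferInstance] (fun ω => γ z (X ω)) :=
    (hγ.of_uncurry_left.comp (comap_measurable X)).stronglyMeasurable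
  have hmix (ω : Ω) : γ (Z ω) (X ω) = Z ω * γ 1 (X ω) + (1 - Z ω) * γ 0 (X ω) := by
    rcases hZ01 ω with h | h <;> simp [h]
  simp only [hmix] at hγ_int ⊢
  exact integral_sq_sub_le_of_overlap hX.comap_le hc hZ (.of_forall hZ01) (hsection 0)
    (hsection 1) h₁ h₀ hγ_int

theorem mean_square_continuity_under_overlap_general
    {Ω 𝒳 : Type*} [MeasureSpace Ω] [IsProbabilityMeasure (ℙ : Measure Ω)]
    [MeasurableSpace 𝒳]
    (X : Ω → 𝒳) (hX : Measurable X)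
    (Z : Ω → ℝ) (hZ : Measurable Z) (hZ01 : ∀ ω, Z ω = 0 ∨ Z ω = 1)
    (π₀ : 𝒳 → ℝ)
    (hcond : ∀ᵐ ω ∂ℙ, (ℙ[Z | MeasurableSpace.comap X inferInstance]) ω = π₀ (X ω))
    (c : ℝ) (hc0 : 0 < c)
    (hover : ∀ᵐ ω ∂ℙ, c ≤ π₀ (X ω) ∧ π₀ (X ω) ≤ 1 - c) :
    (∀ γ : ℝ → 𝒳 → ℝ, Measurable (fun p : ℝ × 𝒳 => γ p.1 p.2) →
      Integrable (fun ω => (γ (Z ω) (X ω)) ^ 2) ℙ →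
      ∫ ω, (γ 1 (X ω) - γ 0 (X ω)) ^ 2 ∂ℙ
        ≤ (2 / c) * ∫ ω, (γ (Z ω) (X ω)) ^ 2 ∂ℙ) ∧
    (∀ γ γ₀ : ℝ → 𝒳 → ℝ,
      Measurable (fun p : ℝ × 𝒳 => γ p.1 p.2) →
      Measurable (fun p : ℝ × 𝒳 => γ₀ p.1 p.2) →
      Integrable (fun ω => (γ (Z ω) (X ω)) ^ 2) ℙ →
      Integrable (fun ω => (γ₀ (Z ω) (X ω)) ^ 2) ℙ →
      ∫ ω, ((γ 1 (X ω) - γ 0 (X ω)) - (γ₀ 1 (X ω) - γ₀ 0 (X ω))) ^ 2 ∂ℙ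
        ≤ (2 / c) * ∫ ω, (γ (Z ω) (X ω) - γ₀ (Z ω) (X ω)) ^ 2 ∂ℙ) := by
  have hZ_int : Integrable Z ℙ := .of_bound hZ.aestronglyMeasurable 1
    (.of_forall fun ω => by rcases hZ01 ω with h | h <;> simp [h])
  have h₁ : ∀ᵐ ω ∂ℙ, c ≤ ℙ[Z | MeasurableSpace.comap X inferInstance] ω := by
    filter_upwards [hcond, hover] with ω h hω using h ▸ hω.1
  have h₀ := one_sub_le_condExp_one_sub hX.comap_le hZ_int (by
    filter_upwards [hcond, hover] with ω h hω using h ▸ hω.2)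
  have part₁ := fun (γ : ℝ → 𝒳 → ℝ) (hγ : Measurable (fun p : ℝ × 𝒳 => γ p.1 p.2)) =>
    integral_sq_sub_comp_le_of_overlap hX hZ_int hZ01 hc0 h₁ h₀ hγ
  refine ⟨part₁, fun γ γ₀ hγ hγ₀ hγ_int hγ₀_int => ?_⟩
  have hcomp (δ : ℝ → 𝒳 → ℝ) (hδ : Measurable (fun p : ℝ × 𝒳 => δ p.1 p.2)) :
      AEStronglyMeasurable (fun ω => δ (Z ω) (X ω)) ℙ :=
    (hδ.comp (hZ.prodMk hX)).aestronglyMeasurable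
  convert part₁ (fun z x => γ z x - γ₀ z x) (hγ.sub hγ₀)
    (integrable_sq_sub (hcomp γ hγ) (hcomp γ₀ hγ₀) hγ_int hγ₀_int) using 3
  ring

/-- Mean-square continuity of `γ ↦ γ(1,X) − γ(0,X)` under overlap: for every measurable
square-integrable `γ`, `𝔼[(γ(1,X) − γ(0,X))²] ≤ (2/c̄)·𝔼[γ(Z,X)²]`; in particular, for
two such functions `γ`, `γ₀`,
`𝔼[((γ(1,X) − γ(0,X)) − (γ₀(1,X) − γ₀(0,X)))²] ≤ (2/c̄)·𝔼[(γ(Z,X) − γ₀(Z,X))²]`. -/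
theorem mean_square_continuity_under_overlap
    {Ω 𝒳 : Type*} [MeasureSpace Ω] [IsProbabilityMeasure (ℙ : Measure Ω)]
    [MeasurableSpace 𝒳]
    (X : Ω → 𝒳) (hX : Measurable X)
    (Z : Ω → ℝ) (hZ : Measurable Z) (hZ01 : ∀ ω, Z ω = 0 ∨ Z ω = 1)
    (π₀ : 𝒳 → ℝ) (hπ : Measurable π₀)
    (hcond : ∀ᵐ ω ∂ℙ, (ℙ[Z | MeasurableSpace.comap X inferInstance]) ω = π₀ (X ω))
    (c : ℝ) (hc0 : 0 < c) (hc2 : c ≤ 1/2)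
    (hover : ∀ᵐ ω ∂ℙ, c ≤ π₀ (X ω) ∧ π₀ (X ω) ≤ 1 - c) :
    (∀ γ : ℝ → 𝒳 → ℝ, Measurable (fun p : ℝ × 𝒳 => γ p.1 p.2) →
      Integrable (fun ω => (γ (Z ω) (X ω)) ^ 2) ℙ →
      ∫ ω, (γ 1 (X ω) - γ 0 (X ω)) ^ 2 ∂ℙ
        ≤ (2 / c) * ∫ ω, (γ (Z ω) (X ω)) ^ 2 ∂ℙ) ∧
    (∀ γ γ₀ : ℝ → 𝒳 → ℝ,
      Measurable (fun p : ℝ × 𝒳 => γ p.1 p.2) →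
      Measurable (fun p : ℝ × 𝒳 => γ₀ p.1 p.2) →
      Integrable (fun ω => (γ (Z ω) (X ω)) ^ 2) ℙ →
      Integrable (fun ω => (γ₀ (Z ω) (X ω)) ^ 2) ℙ →
      ∫ ω, ((γ 1 (X ω) - γ 0 (X ω)) - (γ₀ 1 (X ω) - γ₀ 0 (X ω))) ^ 2 ∂ℙ
        ≤ (2 / c) * ∫ ω, (γ (Z ω) (X ω) - γ₀ (Z ω) (X ω)) ^ 2 ∂ℙ) :=
  mean_square_continuity_under_overlap_general X hX Z hZ hZ01 π₀ hcond c hc0 hover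
end
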